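/- arXiv:2104.04339 — 4 statements merged into one kernel-verified Lean document; each statement's English description precedes it below -/
import Mathlib

section
/- Let M be a first-order L-structure and let f : M^k → M^l be an L-definable (without parameters) function with uniformly finite fibres, say |f^{-1}(b)| ≤ N for all b in the image of f. Suppose B ⊆ M^l is contained in the image of f, and let B̃ := f^{-1}(B) ⊆ M^k. Let A ⊆ M^x and let φ(x,y) be an L-formula with y of length l, such that the formula φ(x; f(z)) (with z of length k) has a uniform strong honest definition on A over B̃. Then φ(x;y) has a uniform strong honest definition on A over B. -/
open FirstOrder

variable {L : Language} {M : Type*} [L.Structure M]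

/-- `ζ(x;z)` is a uniform strong honest definition (USHD) for the relation
`Φ : (M^n) × (M^m) → Prop` (thought of as a partitioned formula `φ(x;y)`) on `A ⊆ M^x` over
`B ⊆ M^y`: for every `a ∈ A` and every finite `B₀ ⊆ B` with `|B₀| ≥ 2` there is a tuple `d` of
elements appearing (as coordinates) in `B₀` such that `M ⊨ ζ(a,d)` and `ζ(x,d)` implies the
`Φ`-type of `a` over `B₀`. -/
def IsUSHD {n m k : ℕ} (ζ : L.Formula (Fin n ⊕ Fin k))
    (Φ : (Fin n → M) → (Fin m → M) → Prop)
    (A : Set (Fin n → M)) (B : Set (Fin m → M)) : Prop :=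
  ∀ a ∈ A, ∀ B₀ : Set (Fin m → M), B₀.Finite → B₀ ⊆ B → 2 ≤ B₀.ncard →
    ∃ d : Fin k → M, (∀ i, ∃ c ∈ B₀, ∃ j, c j = d i) ∧ ζ.Realize (Sum.elim a d) ∧
      ∀ a' : Fin n → M, ζ.Realize (Sum.elim a' d) →
        ∀ c ∈ B₀, (Φ a' c ↔ Φ a c)

/-- The relation `Φ` has a uniform strong honest definition on `A` over `B`. -/
def HasUSHD (L : Language) {M : Type*} [L.Structure M] {n m : ℕ}
    (Φ : (Fin n → M) → (Fin m → M) → Prop)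
    (A : Set (Fin n → M)) (B : Set (Fin m → M)) : Prop :=
  ∃ (k : ℕ) (ζ : L.Formula (Fin n ⊕ Fin k)), IsUSHD ζ Φ A B

/-!
Let `ζ(x; z')` be a USHD for `φ(x; f(z))` over `f⁻¹(B)`. Given `a` and `B₀`, applying it to
`f⁻¹(B₀)` yields a parameter `d` each of whose entries is a coordinate of some preimage of a
tuple `bᵢ ∈ B₀`. A formula over `B₀` cannot name `d`, so it quantifies over all `e` with the same
property; as fibres have at most `N` points there are at most `(N k)^{k'}` such `e`. For each
such `e` for which `ζ(x, e)` does not imply `tp_φ(a / B₀)`, a single `cₑ ∈ B₀` witnesses the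
failure, and a tuple `uₑ ∈ {b, b'}` (two distinct elements of `B₀`) records whether `φ(a, cₑ)`
holds. Requiring that `ζ(x', e)` imply `φ(x', cₑ) ↔ uₑ = b` rules out every bad `e`.
-/

open Language

theorem Set.Finite.exists_subset_range_fin {α : Type*} [Nonempty α] {s : Set α}
    (hs : s.Finite) {N : ℕ} (hN : s.ncard ≤ N) : ∃ g : Fin N → α, s ⊆ Set.range g := by
  obtain ⟨m, g, rfl⟩ := hs.fin_embedding
  rw [Set.ncard_range_of_injective g.injective, Nat.card_eq_fintype_card, Fintype.card_fin] at hN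
  refine ⟨Function.extend (Fin.castLE hN) g fun _ => Classical.arbitrary α, ?_⟩
  rintro _ ⟨i, rfl⟩
  exact ⟨Fin.castLE hN i, (Fin.castLE_injective hN).extend_apply _ _ _⟩

theorem exists_enum_coords_of_fibres {α β κ : Type*} {N k : ℕ} {f : (Fin k → α) → β}
    (hfib : ∀ b ∈ Set.range f, (f ⁻¹' {b}).Finite ∧ (f ⁻¹' {b}).ncard ≤ N)
    {b : κ → β} (hb : ∀ i, b i ∈ Set.range f) :
    ∃ G : (κ → Fin N × Fin k) → κ → α,
      ∀ e : κ → α, (∀ i, ∃ w, f w = b i ∧ ∃ j, w j = e i) → e ∈ Set.range G := by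
  have hcover : ∀ i, ∃ g : Fin N → Fin k → α, f ⁻¹' {b i} ⊆ Set.range g := fun i =>
    have : Nonempty (Fin k → α) := ⟨(hb i).choose⟩
    (hfib _ (hb i)).1.exists_subset_range_fin (hfib _ (hb i)).2
  choose g hg using hcover
  refine ⟨fun h i => g i (h i).1 (h i).2, fun e he => ?_⟩
  choose w hw j hj using he
  choose m hm using fun i => hg i (hw i)
  exact ⟨fun i => (m i, j i), funext fun i => by simp [hm, hj]⟩

theorem exists_single_witness_for_type_agreement {X Y : Type*} (Φ : X → Y → Prop) (a : X)
    (S : Set X) {B₀ : Set Y} (hB₀ : B₀.Nonempty) :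
    ∃ c ∈ B₀, (∀ x ∈ S, (Φ x c ↔ Φ a c)) → ∀ x ∈ S, ∀ y ∈ B₀, (Φ x y ↔ Φ a y) := by
  by_cases hS : ∀ x ∈ S, ∀ y ∈ B₀, (Φ x y ↔ Φ a y)
  · exact ⟨hB₀.some, hB₀.some_mem, fun _ => hS⟩
  · simp only [not_forall] at hS
    obtain ⟨x, hx, y, hy, hxy⟩ := hS
    exact ⟨y, hy, fun h => absurd (h x hx) hxy⟩

theorem Set.ncard_le_ncard_preimage_of_subset_range {α β : Type*} {f : α → β} {s : Set β}
    (hs : s ⊆ Set.range f) (hfin : (f ⁻¹' s).Finite) : s.ncard ≤ (f ⁻¹' s).ncard :=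
  calc s.ncard = (f '' (f ⁻¹' s)).ncard := by rw [Set.image_preimage_eq_of_subset hs]
    _ ≤ (f ⁻¹' s).ncard := Set.ncard_image_le hfin

theorem exists_formula_realize_iff_of_definable_graph {α β : Type*}
    {f : (α → M) → β → M}
    (hdef : Set.Definable (∅ : Set M) L {v : α ⊕ β → M | v ∘ Sum.inr = f (v ∘ Sum.inl)}) :
    ∃ θ : L.Formula (α ⊕ β), ∀ w b, θ.Realize (Sum.elim w b) ↔ f w = b := by
  obtain ⟨θ, hθ⟩ := Set.empty_definable_iff.1 hdef
  refine ⟨θ, fun w b => ?_⟩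
  have := Set.ext_iff.1 hθ (Sum.elim w b)
  simp only [Set.mem_ofPred_eq, Sum.elim_comp_inl, Sum.elim_comp_inr] at this
  rw [← this, eq_comm]

def IsTupleUSHD {n m : ℕ} {Γ : Type*} (ζ : L.Formula (Fin n ⊕ Γ × Fin m))
    (Φ : (Fin n → M) → (Fin m → M) → Prop) (A : Set (Fin n → M)) (B : Set (Fin m → M)) : Prop :=
  ∀ a ∈ A, ∀ B₀ : Set (Fin m → M), B₀.Finite → B₀ ⊆ B → 2 ≤ B₀.ncard →
    ∃ D : Γ → Fin m → M, (∀ g, D g ∈ B₀) ∧ ζ.Realize (Sum.elim a (Function.uncurry D)) ∧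
      ∀ a', ζ.Realize (Sum.elim a' (Function.uncurry D)) → ∀ c ∈ B₀, (Φ a' c ↔ Φ a c)

theorem IsTupleUSHD.hasUSHD {n m : ℕ} {Γ : Type*} [Finite Γ]
    {ζ : L.Formula (Fin n ⊕ Γ × Fin m)} {Φ : (Fin n → M) → (Fin m → M) → Prop}
    {A : Set (Fin n → M)} {B : Set (Fin m → M)} (h : IsTupleUSHD ζ Φ A B) :
    HasUSHD L Φ A B := by
  let e := Finite.equivFin (Γ × Fin m)
  refine ⟨_, ζ.relabel (Sum.map id e), fun a ha B₀ hfin hsub hcard => ?_⟩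
  obtain ⟨D, hD, hDa, hDtype⟩ := h a ha B₀ hfin hsub hcard
  have hrel : ∀ x, (ζ.relabel (Sum.map id e)).Realize (Sum.elim x (Function.uncurry D ∘ e.symm))
      ↔ ζ.Realize (Sum.elim x (Function.uncurry D)) := fun x => by
    simp [Sum.elim_comp_map, Function.comp_assoc]
  exact ⟨Function.uncurry D ∘ e.symm, fun i => ⟨D (e.symm i).1, hD _, (e.symm i).2, rfl⟩,
    (hrel a).2 hDa, fun a' ha' => hDtype a' ((hrel a').1 ha')⟩

namespace FirstOrder.Language.Formula

noncomputable def tupleEq (l : ℕ) : L.Formula (Fin l ⊕ Fin l) :=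
  Formula.iInf fun j => Term.equal (var (Sum.inl j)) (var (Sum.inr j))

@[simp]
theorem realize_tupleEq {l : ℕ} (u v : Fin l → M) :
    (tupleEq (L := L) l).Realize (Sum.elim u v) ↔ u = v := by
  simp [tupleEq, funext_iff]

noncomputable def coordOfSolution {β : Type*} {k : ℕ} (θ : L.Formula (Fin k ⊕ β)) :
    L.Formula (β ⊕ Unit) :=
  Formula.iExs (Fin k) <|
    θ.relabel (Sum.elim Sum.inr (Sum.inl ∘ Sum.inl)) ⊓
      Formula.iSup fun j => Term.equal (var (Sum.inr j)) (var (Sum.inl (Sum.inr ())))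

@[simp]
theorem realize_coordOfSolution {β : Type*} {k : ℕ} (θ : L.Formula (Fin k ⊕ β)) (b : β → M)
    (x : M) : (coordOfSolution θ).Realize (Sum.elim b fun _ => x) ↔
      ∃ w : Fin k → M, θ.Realize (Sum.elim w b) ∧ ∃ j, w j = x := by
  simp [coordOfSolution, Sum.comp_elim, ← Function.comp_assoc]

end FirstOrder.Language.Formula

section Transfer

variable {k l n k' : ℕ}

noncomputable def transferFormula (ι : Type*) [Finite ι] (θ : L.Formula (Fin k ⊕ Fin l))
    (ζ : L.Formula (Fin n ⊕ Fin k')) (φ : L.Formula (Fin n ⊕ Fin l)) :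
    L.Formula (Fin n ⊕ (Fin k' ⊕ ι ⊕ ι ⊕ Unit) × Fin l) :=
  let par (g : Fin k' ⊕ ι ⊕ ι ⊕ Unit) (j : Fin l) :
      (Fin n ⊕ (Fin k' ⊕ ι ⊕ ι ⊕ Unit) × Fin l) ⊕ Fin k' := Sum.inl (Sum.inr (g, j))
  Formula.iExs (Fin k') <|
    (Formula.iInf fun i =>
      (Formula.coordOfSolution θ).relabel (Sum.elim (par (Sum.inl i)) fun _ => Sum.inr i)) ⊓
    ζ.relabel (Sum.map Sum.inl id) ⊓
    Formula.iAlls (Fin n) ((ζ.relabel (Sum.elim Sum.inr (Sum.inl ∘ Sum.inr))).imp <|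
      Formula.iInf fun s =>
        (φ.relabel (Sum.elim Sum.inr (Sum.inl ∘ par (Sum.inr (Sum.inl s))))).iff
          ((Formula.tupleEq l).relabel (Sum.elim (Sum.inl ∘ par (Sum.inr (Sum.inr (Sum.inl s))))
            (Sum.inl ∘ par (Sum.inr (Sum.inr (Sum.inr ())))))))

theorem realize_transferFormula {ι : Type*} [Finite ι] {f : (Fin k → M) → Fin l → M}
    {θ : L.Formula (Fin k ⊕ Fin l)} (hθ : ∀ w b, θ.Realize (Sum.elim w b) ↔ f w = b)
    (ζ : L.Formula (Fin n ⊕ Fin k')) (φ : L.Formula (Fin n ⊕ Fin l)) (x : Fin n → M)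
    (b : Fin k' → Fin l → M) (c u : ι → Fin l → M) (u₀ : Fin l → M) :
    (transferFormula ι θ ζ φ).Realize
        (Sum.elim x (Function.uncurry (Sum.elim b (Sum.elim c (Sum.elim u fun _ => u₀))))) ↔
      ∃ e : Fin k' → M, (∀ i, ∃ w, f w = b i ∧ ∃ j, w j = e i) ∧ ζ.Realize (Sum.elim x e) ∧
        ∀ x', ζ.Realize (Sum.elim x' e) → ∀ s, (φ.Realize (Sum.elim x' (c s)) ↔ u s = u₀) := by
  simp only [transferFormula, Formula.realize_iExs, Formula.realize_inf, Formula.realize_iInf,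
    Formula.realize_iAlls, Formula.realize_imp, Formula.realize_iff, Formula.realize_relabel,
    Sum.comp_elim, Sum.elim_comp_map]
  simp [Function.comp_def, hθ, and_assoc]

theorem isTupleUSHD_transferFormula (N : ℕ) {f : (Fin k → M) → Fin l → M}
    {θ : L.Formula (Fin k ⊕ Fin l)} (hθ : ∀ w b, θ.Realize (Sum.elim w b) ↔ f w = b)
    (hfib : ∀ b ∈ Set.range f, (f ⁻¹' {b}).Finite ∧ (f ⁻¹' {b}).ncard ≤ N)
    {B : Set (Fin l → M)} (hB : B ⊆ Set.range f) {A : Set (Fin n → M)}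
    {φ : L.Formula (Fin n ⊕ Fin l)} {ζ : L.Formula (Fin n ⊕ Fin k')}
    (hζ : IsUSHD ζ (fun a z => φ.Realize (Sum.elim a (f z))) A (f ⁻¹' B)) :
    IsTupleUSHD (transferFormula (Fin k' → Fin N × Fin k) θ ζ φ)
      (fun a b => φ.Realize (Sum.elim a b)) A B := by
  classical
  intro a ha B₀ hfin hsub hcard
  have hB₀ : B₀ ⊆ Set.range f := hsub.trans hB
  have hfin' : (f ⁻¹' B₀).Finite := hfin.preimage' fun b hb => (hfib b (hB₀ hb)).1
  obtain ⟨d, hd, hda, hdtype⟩ := hζ a ha _ hfin' (Set.preimage_mono hsub)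
    (hcard.trans (Set.ncard_le_ncard_preimage_of_subset_range hB₀ hfin'))
  choose w hw j hj using hd
  obtain ⟨G, hG⟩ := exists_enum_coords_of_fibres hfib (b := fun i => f (w i)) fun i => ⟨w i, rfl⟩
  obtain ⟨b₁, hb₁, b₂, hb₂, hb₁₂⟩ := (Set.one_lt_ncard hfin).1 hcard
  choose c hc hcG using fun h => exists_single_witness_for_type_agreement
    (fun x y => φ.Realize (Sum.elim x y)) a {x | ζ.Realize (Sum.elim x (G h))} ⟨b₁, hb₁⟩
  let u h := if φ.Realize (Sum.elim a (c h)) then b₁ else b₂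
  have hu : ∀ h, u h = b₁ ↔ φ.Realize (Sum.elim a (c h)) := fun h => by
    simp [u, hb₁₂.symm]
  refine ⟨Sum.elim (fun i => f (w i)) (Sum.elim c (Sum.elim u fun _ => b₁)), ?_, ?_, ?_⟩
  · rintro (i | h | h | -)
    exacts [hw i, hc h, ite_mem.2 ⟨fun _ => hb₁, fun _ => hb₂⟩, hb₁]
  · rw [realize_transferFormula hθ]
    refine ⟨d, fun i => ⟨w i, rfl, j i, hj i⟩, hda, fun x hx h => ?_⟩
    obtain ⟨v, hv⟩ := hB₀ (hc h)
    rw [hu, ← hv]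
    exact hdtype x hx v (show f v ∈ B₀ from hv ▸ hc h)
  · intro a' ha' y hy
    obtain ⟨e, he, hζe, hagree⟩ := (realize_transferFormula hθ ..).1 ha'
    obtain ⟨h, rfl⟩ := hG e he
    exact hcG h (fun x hx => (hagree x hx h).trans (hu h)) a' hζe y hy

end Transfer

/-- **Transfer of USHDs along definable finite-to-one maps** (Lemma 3.4).

Let `f : M^k → M^l` be an `L`-definable (without parameters) function with uniformly finite
fibres, `|f⁻¹(b)| ≤ N` for all `b` in the image of `f`.  Suppose `B ⊆ M^l` is contained in the
image of `f` and let `B̃ = f⁻¹(B)`.  Let `A ⊆ M^x` and let `φ(x,y)` be an `L`-formula such that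
`φ(x; f(z))` has a USHD on `A` over `B̃`.  Then `φ(x;y)` has a USHD on `A` over `B`. -/
theorem hasUSHD_of_hasUSHD_comp_definable_finite_fibres
    {k l n : ℕ} (N : ℕ) (f : (Fin k → M) → (Fin l → M))
    (hdef : Set.Definable (∅ : Set M) L
      {v : (Fin k ⊕ Fin l) → M | v ∘ Sum.inr = f (v ∘ Sum.inl)})
    (hfib : ∀ b ∈ Set.range f, (f ⁻¹' {b}).Finite ∧ (f ⁻¹' {b}).ncard ≤ N)
    (B : Set (Fin l → M)) (hB : B ⊆ Set.range f)
    (A : Set (Fin n → M)) (φ : L.Formula (Fin n ⊕ Fin l))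
    (hUSHD : HasUSHD L (fun a z => φ.Realize (Sum.elim a (f z))) A (f ⁻¹' B)) :
    HasUSHD L (fun a b => φ.Realize (Sum.elim a b)) A B := by
  obtain ⟨k', ζ, hζ⟩ := hUSHD
  obtain ⟨θ, hθ⟩ := exists_formula_realize_iff_of_definable_graph hdef
  exact (isTupleUSHD_transferFormula N hθ hfib hB hζ).hasUSHD
end

section
/- Let K be a finitely generated field (i.e. K is generated as a field by finitely many elements over its prime field). Then K admits a valuation whose residue field is finite; that is, there is a valuation subring O of K whose residue field O/m(O) is a finite field. -/
/-!
Say that a field has property (P) if it carries a valuation ring with finite residue field.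
(P) pulls back along field embeddings (restrict the valuation ring), passes from the residue field
of any valuation ring to the field itself (composite valuation rings), and passes to finite
extensions (extend the valuation ring; the residue degree is at most the degree). Hence (P) holds
for the prime field, which is finite or embeds in `ℚ_[2]`, and survives adjoining one element `x`
to a field `F`: if `x` is algebraic, `F(x)/F` is finite, and otherwise `F(x)` embeds in `F((X))`,
whose `X`-adic valuation ring has residue field `F`.
-/

open IsLocalRing

lemma IsLocalRing.finite_residueField_of_isLocalHom {R S : Type*} [CommRing R] [IsLocalRing R]
    [CommRing S] [IsLocalRing S] (f : R →+* S) [IsLocalHom f] [Finite (ResidueField S)] :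
    Finite (ResidueField R) :=
  Finite.of_injective _ (ResidueField.map f).injective

namespace ValuationSubring

variable {K L : Type*} [Field K] [Field L]

def restrictComap (A : ValuationSubring L) (f : K →+* L) : A.comap f →+* A :=
  f.restrict _ _ fun _ ↦ mem_comap.mp

instance (A : ValuationSubring L) (f : K →+* L) : IsLocalHom (A.restrictComap f) where
  map_nonunit a ha := by
    rw [Submonoid.isUnit_iff_and] at ha ⊢
    refine ⟨fun h ↦ ha.1 (by simp [restrictComap, h]), ?_⟩
    rw [mem_comap, map_inv₀]
    exact ha.2

theorem residue_mk_inv (A : ValuationSubring K) {a : A} (h0 : (a : K) ≠ 0)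
    (h : (a : K)⁻¹ ∈ A) : residue A ⟨_, h⟩ = (residue A a)⁻¹ := by
  refine eq_inv_of_mul_eq_one_left ?_
  rw [← map_mul, ← map_one (residue A)]
  exact congrArg _ (Subtype.ext (inv_mul_cancel₀ h0))

section composite

variable (A : ValuationSubring K) (B : ValuationSubring (ResidueField A))

def composite : ValuationSubring K where
  toSubring := (B.toSubring.comap (residue A)).map A.subtype
  mem_or_inv_mem' x := by
    simp only [Subring.mem_carrier, Subring.mem_map, Subring.mem_comap, coe_subtype]
    by_cases hx : x ∈ A
    · by_cases hunit : IsUnit (⟨x, hx⟩ : A)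
      · obtain ⟨hx0, hinv⟩ := Submonoid.isUnit_iff_and.mp hunit
        rcases B.mem_or_inv_mem (residue A ⟨x, hx⟩) with hB | hB
        · exact .inl ⟨_, hB, rfl⟩
        · exact .inr ⟨⟨x⁻¹, hinv⟩, by rwa [residue_mk_inv A hx0 hinv], rfl⟩
      · refine .inl ⟨⟨x, hx⟩, ?_, rfl⟩
        rw [(residue_eq_zero_iff _).mpr hunit]
        exact B.zero_mem
    · have hinv : x⁻¹ ∈ A := (A.mem_or_inv_mem x).resolve_left hx
      have hunit : ¬IsUnit (⟨x⁻¹, hinv⟩ : A) := fun h ↦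
        hx (inv_inv x ▸ Submonoid.inv_mem_of_isUnit h)
      refine .inr ⟨⟨x⁻¹, hinv⟩, ?_, rfl⟩
      rw [(residue_eq_zero_iff _).mpr hunit]
      exact B.zero_mem

variable {A B} in
theorem mem_composite {x : K} :
    x ∈ A.composite B ↔ ∃ h : x ∈ A, residue A ⟨x, h⟩ ∈ B := by
  change x ∈ (B.toSubring.comap (residue A)).map A.subtype ↔ _
  simp [Subring.mem_map]

theorem composite_le : A.composite B ≤ A := fun _ hx ↦ (mem_composite.mp hx).1

noncomputable def compositeToResidue : A.composite B →+* B :=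
  ((residue A).comp (inclusion _ _ (A.composite_le B))).codRestrict B
    fun z ↦ (mem_composite.mp z.2).2

instance : IsLocalHom (A.compositeToResidue B) where
  map_nonunit z hz := by
    obtain ⟨hzA, hzB⟩ := mem_composite.mp z.2
    replace hz : IsUnit (⟨residue A ⟨z, hzA⟩, hzB⟩ : B) := hz
    have hres : residue A ⟨z, hzA⟩ ≠ 0 := fun h ↦ hz.ne_zero (Subtype.ext h)
    obtain ⟨hz0, hinv⟩ := Submonoid.isUnit_iff_and.mp ((residue_ne_zero_iff_isUnit _).mp hres)
    refine Submonoid.isUnit_iff_and.mpr ⟨hz0, mem_composite.mpr ⟨hinv, ?_⟩⟩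
    rw [residue_mk_inv A hz0 hinv]
    exact Submonoid.inv_mem_of_isUnit hz

instance [Finite (ResidueField B)] : Finite (ResidueField (A.composite B)) :=
  finite_residueField_of_isLocalHom (A.compositeToResidue B)

end composite

theorem exists_comap_eq (f : K →+* L) (W : ValuationSubring K) :
    ∃ A : ValuationSubring L, A.comap f = W := by
  obtain ⟨A, hWA, hloc⟩ := exists_factor_valuationRing (f.comp W.subtype)
  refine ⟨A, le_antisymm (fun z hz ↦ ?_) fun z hz ↦ hWA ⟨z, hz⟩⟩
  by_contra hzW
  have hinv : z⁻¹ ∈ W := (W.mem_or_inv_mem z).resolve_left hzW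
  have hz0 : z ≠ 0 := fun h ↦ hzW (h ▸ W.zero_mem)
  have hunit : IsUnit (⟨z⁻¹, hinv⟩ : W) := hloc.map_nonunit _ <|
    Submonoid.isUnit_iff_and.mpr ⟨by simpa using hz0, by simpa [map_inv₀] using hz⟩
  exact hzW (inv_inv z ▸ Submonoid.inv_mem_of_isUnit hunit)

section residueDegree

variable {F : Type*} [Field F] [Algebra F K] (A : ValuationSubring K)

noncomputable instance (f : L →+* K) : Algebra (ResidueField (A.comap f)) (ResidueField A) :=
  (ResidueField.map (A.restrictComap f)).toAlgebra

theorem linearIndependent_of_linearIndependent_residue {ι : Type*} {b : ι → A}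
    (hb : LinearIndependent (ResidueField (A.comap (algebraMap F K))) (residue A ∘ b)) :
    LinearIndependent F fun i ↦ (b i : K) := by
  rw [linearIndependent_iff_finset_linearIndependent]
  intro s
  replace hb := hb.comp _ (Subtype.val_injective (p := (· ∈ s)))
  rw [Fintype.linearIndependent_iff] at hb ⊢
  intro g hg i
  by_contra hgi
  -- dividing by a coefficient of largest valuation makes every coefficient integral and one of
  -- them equal to `1`, so the relation survives reduction modulo the maximal ideal
  obtain ⟨j, -, hmax⟩ := Finset.univ.exists_max_image
    (fun i ↦ A.valuation (algebraMap F K (g i))) ⟨i, Finset.mem_univ _⟩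
  have hgj : g j ≠ 0 := fun h ↦ hgi (by simpa [h] using hmax i (Finset.mem_univ _))
  have hc (k : s) : algebraMap F K (g k / g j) ∈ A := by
    refine A.mem_of_valuation_le_one _ ?_
    rw [map_div₀, map_div₀, div_le_one₀ (zero_lt_iff.mpr (by simpa using hgj))]
    exact hmax k (Finset.mem_univ _)
  let c (k : s) : A.comap (algebraMap F K) := ⟨g k / g j, hc k⟩
  have hsum : ∑ k, A.restrictComap _ (c k) * b k = 0 := by
    apply Subtype.ext
    simp only [Function.comp_apply] at hg
    push_cast [restrictComap, RingHom.coe_restrict_apply]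
    calc ∑ k, algebraMap F K (g k / g j) * (b k : K)
        = (algebraMap F K (g j))⁻¹ * ∑ k, g k • (b k : K) := by
          rw [Finset.mul_sum]
          refine Finset.sum_congr rfl fun k _ ↦ ?_
          rw [map_div₀, Algebra.smul_def]
          ring
      _ = 0 := by rw [hg, mul_zero]
  have hcj := hb (fun k ↦ residue _ (c k)) (by
    simp only [Function.comp_apply, Algebra.smul_def, RingHom.algebraMap_toAlgebra,
      ResidueField.map_residue, ← map_mul, ← map_sum, hsum, map_zero]) j
  rw [show c j = 1 from Subtype.ext (div_self hgj), map_one] at hcj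
  exact one_ne_zero hcj

instance moduleFinite_residueField_comap [FiniteDimensional F K] :
    Module.Finite (ResidueField (A.comap (algebraMap F K))) (ResidueField A) := by
  let v := Module.Basis.ofVectorSpace (ResidueField (A.comap (algebraMap F K))) (ResidueField A)
  choose b hb using fun i ↦ residue_surjective (v i)
  have hres : residue A ∘ b = v := funext hb
  have : Finite _ := (A.linearIndependent_of_linearIndependent_residue (F := F) (b := b)
    (hres ▸ v.linearIndependent)).finite
  exact .of_basis v

end residueDegree

end ValuationSubring

open ValuationSubring IntermediateField
open scoped Padic RatFunc

def HasFiniteResidueValuation (K : Type*) [Field K] : Prop :=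
  ∃ O : ValuationSubring K, Finite (ResidueField O)

namespace HasFiniteResidueValuation

variable {K L : Type*} [Field K] [Field L]

theorem of_finite [Finite K] : HasFiniteResidueValuation K :=
  ⟨⊤, Finite.of_surjective _ residue_surjective⟩

theorem comap (f : K →+* L) : HasFiniteResidueValuation L → HasFiniteResidueValuation K
  | ⟨A, _⟩ => ⟨A.comap f, finite_residueField_of_isLocalHom (A.restrictComap f)⟩

theorem of_residueField (A : ValuationSubring K) :
    HasFiniteResidueValuation (ResidueField A) → HasFiniteResidueValuation K
  | ⟨B, _⟩ => ⟨A.composite B, inferInstance⟩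

theorem of_finiteDimensional [Algebra K L] [FiniteDimensional K L] :
    HasFiniteResidueValuation K → HasFiniteResidueValuation L := by
  rintro ⟨W, _⟩
  obtain ⟨A, rfl⟩ := exists_comap_eq (algebraMap K L) W
  exact ⟨A, Module.finite_of_finite (ResidueField (A.comap (algebraMap K L)))⟩

theorem of_isDiscreteValuationRing (R : Type*) [CommRing R] [IsDomain R]
    [IsDiscreteValuationRing R] [Algebra R K] [IsFractionRing R K]
    (h : HasFiniteResidueValuation (ResidueField R)) : HasFiniteResidueValuation K :=
  of_residueField _ <| h.comap (ResidueField.mapEquiv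
    (IsDiscreteValuationRing.equivValuationSubring (A := R) (K := K))).symm.toRingHom

theorem padic (p : ℕ) [Fact p.Prime] : HasFiniteResidueValuation ℚ_[p] :=
  of_isDiscreteValuationRing ℤ_[p] <|
    have : Finite (ResidueField ℤ_[p]) := .of_equiv _ PadicInt.residueField.symm.toEquiv
    of_finite

theorem laurentSeries (h : HasFiniteResidueValuation K) :
    HasFiniteResidueValuation (LaurentSeries K) :=
  of_isDiscreteValuationRing (PowerSeries K) <|
    h.comap PowerSeries.residueFieldOfPowerSeries.toRingHom

theorem adjoin_simple [Algebra K L] (h : HasFiniteResidueValuation K) (x : L) :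
    HasFiniteResidueValuation K⟮x⟯ := by
  by_cases hx : IsAlgebraic K x
  · have := adjoin.finiteDimensional hx.isIntegral
    exact h.of_finiteDimensional
  · exact h.laurentSeries.comap ((algebraMap (RatFunc K) (LaurentSeries K)).comp
      (RatFunc.algEquivOfTranscendental x hx).symm.toRingHom)

theorem subfield_bot : HasFiniteResidueValuation (⊥ : Subfield K) := by
  obtain ⟨p, _⟩ := CharP.exists K
  rcases CharP.char_is_prime_or_zero K p with hp | rfl
  · have : Fact p.Prime := ⟨hp⟩
    have := Subfield.fintypeBot K p
    exact of_finite
  · have : CharZero K := CharP.charP_to_charZero K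
    exact (padic 2).comap <| (Rat.castHom _).comp <|
      (algebraMap ℚ K).rangeRestrictFieldEquiv.symm.toRingHom.comp
        (Subfield.inclusion Subfield.bot_eq_of_charZero.le)

theorem subfield_closure_finset (s : Finset K) :
    HasFiniteResidueValuation (Subfield.closure (s : Set K)) := by
  classical
  induction s using Finset.induction_on with
  | empty => rw [Finset.coe_empty, Subfield.closure_empty]; exact subfield_bot
  | insert x s _ ih =>
    set F := Subfield.closure (s : Set K)
    have hle : Subfield.closure ((insert x s : Finset K) : Set K) ≤ F⟮x⟯.toSubfield := by
      rw [Subfield.closure_le, Finset.coe_insert]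
      rintro y (rfl | hy)
      · exact mem_adjoin_simple_self F y
      · exact F⟮x⟯.algebraMap_mem ⟨y, Subfield.subset_closure hy⟩
    exact (ih.adjoin_simple x).comap (Subfield.inclusion hle)

end HasFiniteResidueValuation

/-- **Finitely generated fields admit valuations with finite residue field** (Lemma 4.1).

If `K` is a finitely generated field (generated as a field by finitely many elements over its
prime field), then there is a valuation subring `O` of `K` whose residue field is finite. -/
theorem exists_valuationSubring_finite_residueField
    (K : Type*) [Field K]
    (hfg : ∃ s : Finset K, Subfield.closure (s : Set K) = ⊤) :
    ∃ O : ValuationSubring K, Finite (IsLocalRing.ResidueField O) := by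
  obtain ⟨s, hs⟩ := hfg
  have h := HasFiniteResidueValuation.subfield_closure_finset s
  rw [hs] at h
  exact h.comap Subfield.topEquiv.symm.toRingHom
end

section
/- Let p be a prime and let ℘(x) := x^p − x be the Artin-Schreier map on 𝔽_p(t). For any two distinct positive integers a, b not divisible by p, the element t^b − t^a does not belong to ℘(𝔽_p(t)); equivalently, the elements t^a for a ∈ ℕ ∖ pℕ lie in pairwise distinct additive cosets of ℘(𝔽_p(t)). -/
/-!
If `y ^ p - y` is a polynomial, then `y` is a root of a monic polynomial over the integrally
closed ring `𝔽_p[t]`, hence is itself a polynomial `z`. But `deg (z ^ p - z)` is always a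
multiple of `p`, whereas `deg (t ^ b - t ^ a) = max a b` is not.
-/

open Polynomial

theorem isIntegral_of_pow_sub_self_eq_algebraMap {R A : Type*} [CommRing R] [Ring A]
    [Algebra R A] {n : ℕ} (hn : 1 < n) {y : A} {r : R} (hy : y ^ n - y = algebraMap R A r) :
    IsIntegral R y := by
  refine ⟨X ^ n - (X + C r), monic_X_pow_sub ?_, ?_⟩
  · calc (X + C r).degree ≤ 1 :=
          (degree_add_le _ _).trans (max_le degree_X_le (degree_C_le.trans zero_le_one))
      _ < (n : WithBot ℕ) := by exact_mod_cast hn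
  · simp [← sub_sub, hy]

namespace Polynomial

theorem dvd_natDegree_pow_sub_self {R : Type*} [CommRing R] [NoZeroDivisors R] {n : ℕ}
    (hn : 1 < n) (z : R[X]) : n ∣ (z ^ n - z).natDegree := by
  rcases Nat.eq_zero_or_pos z.natDegree with hz | hz
  · rw [eq_C_of_natDegree_eq_zero hz, ← C_pow, ← C_sub, natDegree_C]
    exact dvd_zero n
  · rw [natDegree_sub_eq_left_of_natDegree_lt, natDegree_pow]
    · exact dvd_mul_right n _
    · rw [natDegree_pow]
      exact lt_mul_left hz hn

theorem natDegree_X_pow_sub_X_pow {R : Type*} [Ring R] [Nontrivial R] {a b : ℕ} (hab : a ≠ b) :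
    (X ^ a - X ^ b : R[X]).natDegree = max a b := by
  rcases hab.lt_or_gt with h | h
  · rw [natDegree_sub_eq_right_of_natDegree_lt] <;> simp [h, h.le]
  · rw [natDegree_sub_eq_left_of_natDegree_lt] <;> simp [h, h.le]

end Polynomial

theorem pow_sub_pow_not_mem_artin_schreier_image_general (p : ℕ) [Fact p.Prime]
    (a b : ℕ) (hab : a ≠ b) (hpa : ¬ p ∣ a) (hpb : ¬ p ∣ b) :
    ¬ ∃ y : RatFunc (ZMod p),
        (RatFunc.X : RatFunc (ZMod p)) ^ b - RatFunc.X ^ a = y ^ p - y := by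
  rintro ⟨y, hy⟩
  have hp : 1 < p := (Fact.out : p.Prime).one_lt
  obtain ⟨z, rfl⟩ : ∃ z : (ZMod p)[X], algebraMap _ _ z = y :=
    IsIntegrallyClosed.isIntegral_iff.mp <| isIntegral_of_pow_sub_self_eq_algebraMap hp
      (r := X ^ b - X ^ a) (by simp [hy, RatFunc.algebraMap_X])
  have hz : z ^ p - z = X ^ b - X ^ a :=
    RatFunc.algebraMap_injective _ (by simp [← hy, RatFunc.algebraMap_X])
  have hdvd := dvd_natDegree_pow_sub_self hp z
  rw [hz, natDegree_X_pow_sub_X_pow hab.symm] at hdvd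
  rcases max_choice b a with h | h <;> rw [h] at hdvd
  exacts [hpb hdvd, hpa hdvd]

/-- **Distinct Artin–Schreier cosets** (the computation in the first Claim of the proof of
Proposition 4.3).

Let `p` be a prime and `℘(x) = x^p - x` the Artin–Schreier map on `𝔽_p(t)`.  For any two
distinct positive integers `a`, `b` not divisible by `p`, the element `t^b - t^a` does not
belong to `℘(𝔽_p(t))`; equivalently, the `t^a` for `a ∈ ℕ ∖ pℕ` lie in pairwise distinct
additive cosets of `℘(𝔽_p(t))`. -/
theorem pow_sub_pow_not_mem_artin_schreier_image (p : ℕ) [Fact p.Prime]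
    (a b : ℕ) (ha : 0 < a) (hb : 0 < b) (hab : a ≠ b) (hpa : ¬ p ∣ a) (hpb : ¬ p ∣ b) :
    ¬ ∃ y : RatFunc (ZMod p),
        (RatFunc.X : RatFunc (ZMod p)) ^ b - RatFunc.X ^ a = y ^ p - y :=
  pow_sub_pow_not_mem_artin_schreier_image_general p a b hab hpa hpb
end

section
/- Let P be a finite set of points in the real plane ℝ² and let L be a finite set of (affine) lines in ℝ². Then the number of incidences satisfies |{ (p, l) ∈ P × L : p ∈ l }| ≤ 4|P|^{2/3}|L|^{2/3} + 4|P| + |L|. -/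
/-!
After a shear, the points of `P` have distinct abscissas. Joining consecutive points of `P` on
each line draws a graph on `P` with straight segments; it has at least `I - |L|` edges, `I` the
number of incidences. Two edges cross only if they lie on different lines, at the intersection
point of those lines, so there are at most `|L|²` crossing pairs, and crossing edges have four
distinct endpoints.

A crossing-free drawing of this kind has at most `3|V|` edges. Sweep a vertical line from left
to right and count the pairs of edges with a common left endpoint that are adjacent on the
sweep line. Passing a vertex `q` destroys at most the two pairs that enclose `q`, keeps every
other pair adjacent (edges cannot swap without crossing), and creates a pair between any two
consecutive edges leaving `q`; so the count grows by at least `outdeg q - 3`, and it is zero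
before the first and after the last vertex.

Deleting one edge of each crossing pair gives `|E| ≤ 3|V| + cr`. Applied to a random sample of
the vertices, kept with probability `p`, this gives `p²|E| ≤ 3p|V| + p⁴ cr`, and
`p = 4|V|/|E|` yields `|E|³ ≤ 64 |V|² cr` as soon as `|E| ≥ 4|V|`.
-/

open Finset

noncomputable section

namespace SzemerediTrotter

open Classical Filter Topology

section ConsecutivePairs

variable {α β : Type*} [LinearOrder β]

def consecutivePairs (s : Finset α) (f : α → β) : Finset (α × α) :=
  (s ×ˢ s).filter fun p => f p.1 < f p.2 ∧ ∀ c ∈ s, ¬(f p.1 < f c ∧ f c < f p.2)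

variable {s : Finset α} {f : α → β} {p p' : α × α}

theorem mem_consecutivePairs :
    p ∈ consecutivePairs s f ↔
      (p.1 ∈ s ∧ p.2 ∈ s) ∧ f p.1 < f p.2 ∧ ∀ c ∈ s, ¬(f p.1 < f c ∧ f c < f p.2) := by
  rw [consecutivePairs, mem_filter, mem_product]

theorem card_le_card_consecutivePairs_add_one (hf : Set.InjOn f s) :
    #s ≤ #(consecutivePairs s f) + 1 := by
  induction s using Finset.induction_on_max_value f with
  | empty => simp
  | insert a t ha hmax ih =>
    rcases t.eq_empty_or_nonempty with rfl | ht
    · simp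
    obtain ⟨b, hb, hbmax⟩ := t.exists_max_image f ht
    have hba : f b < f a :=
      (hmax b hb).lt_of_ne fun h => ha (hf (mem_insert_of_mem hb) (mem_insert_self a t) h ▸ hb)
    have hsub : insert (b, a) (consecutivePairs t f) ⊆ consecutivePairs (insert a t) f := by
      intro p hp
      rw [mem_consecutivePairs]
      rcases Finset.mem_insert.1 hp with rfl | hp
      · refine ⟨⟨mem_insert_of_mem hb, mem_insert_self a t⟩, hba, fun c hc ⟨hbc, hca⟩ => ?_⟩
        rcases Finset.mem_insert.1 hc with rfl | hc
        · exact hca.false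
        · exact (hbmax c hc).not_gt hbc
      obtain ⟨⟨h₁, h₂⟩, hlt, hbtw⟩ := mem_consecutivePairs.1 hp
      refine ⟨⟨mem_insert_of_mem h₁, mem_insert_of_mem h₂⟩, hlt, fun c hc hbtw' => ?_⟩
      rcases Finset.mem_insert.1 hc with rfl | hc
      · exact (hmax _ h₂).not_gt hbtw'.2
      · exact hbtw c hc hbtw'
    have hnew : (b, a) ∉ consecutivePairs t f := fun h => ha (mem_consecutivePairs.1 h).1.2
    calc #(insert a t) = #t + 1 := card_insert_of_notMem ha
      _ ≤ #(insert (b, a) (consecutivePairs t f)) + 1 := by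
        rw [card_insert_of_notMem hnew]
        exact Nat.add_le_add_right (ih (hf.mono (by simp))) 1
      _ ≤ #(consecutivePairs (insert a t) f) + 1 := Nat.add_le_add_right (card_le_card hsub) 1

theorem eq_of_mem_consecutivePairs (hf : Set.InjOn f s) (hp : p ∈ consecutivePairs s f)
    (hp' : p' ∈ consecutivePairs s f) (h₁ : f p.1 < f p'.2) (h₂ : f p'.1 < f p.2) : p = p' := by
  obtain ⟨⟨hp₁, hp₂⟩, hlt, hbtw⟩ := mem_consecutivePairs.1 hp
  obtain ⟨⟨hp₁', hp₂'⟩, hlt', hbtw'⟩ := mem_consecutivePairs.1 hp'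
  have e₁ : f p.1 = f p'.1 := by
    rcases lt_trichotomy (f p.1) (f p'.1) with h | h | h
    · exact absurd ⟨h, h₂⟩ (hbtw _ hp₁')
    · exact h
    · exact absurd ⟨h, h₁⟩ (hbtw' _ hp₁)
  have e₂ : f p.2 = f p'.2 := by
    rcases lt_trichotomy (f p.2) (f p'.2) with h | h | h
    · exact absurd ⟨e₁ ▸ hlt, h⟩ (hbtw' _ hp₂)
    · exact h
    · exact absurd ⟨e₁ ▸ hlt', h⟩ (hbtw _ hp₂')
  exact Prod.ext (hf hp₁ hp₁' e₁) (hf hp₂ hp₂' e₂)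

end ConsecutivePairs

section Persistence

variable {f g : ℝ → ℝ} {a b : ℝ}

theorem le_of_lt_of_ne_on_Ioo (hf : Continuous f) (hg : Continuous g) (hab : a ≤ b)
    (hne : ∀ x ∈ Set.Ioo a b, f x ≠ g x) (ha : f a < g a) : f b ≤ g b := by
  by_contra! hb
  obtain ⟨x, hx, hfx⟩ := intermediate_value_Ioo hab (hf.sub hg).continuousOn
    (show (0 : ℝ) ∈ Set.Ioo (f a - g a) (f b - g b) from ⟨by linarith, by linarith⟩)
  exact hne x hx (sub_eq_zero.1 hfx)

theorem le_of_lt_of_ne_on_Ioo' (hf : Continuous f) (hg : Continuous g) (hab : a ≤ b)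
    (hne : ∀ x ∈ Set.Ioo a b, f x ≠ g x) (hb : f b < g b) : f a ≤ g a := by
  by_contra! ha
  obtain ⟨x, hx, hfx⟩ := intermediate_value_Ioo' hab (hf.sub hg).continuousOn
    (show (0 : ℝ) ∈ Set.Ioo (f b - g b) (f a - g a) from ⟨by linarith, by linarith⟩)
  exact hne x hx (sub_eq_zero.1 hfx)

end Persistence

theorem exists_lt_forall_lt (s : Finset ℝ) (x : ℝ) : ∃ y < x, ∀ a ∈ s, a < x → a < y := by
  have hs : ∀ᶠ y in 𝓝[<] x, ∀ a ∈ s, a < x → a < y := by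
    refine (eventually_all_finset s).2 fun a _ => ?_
    by_cases ha : a < x
    · exact mem_of_superset (Ioo_mem_nhdsLT ha) fun y hy _ => hy.1
    · exact .of_forall fun _ h => absurd h ha
  exact (eventually_mem_nhdsWithin.and hs).exists

section Sampling

variable {α β : Type*}

/-- The probability that keeping each element of `V` independently with probability `p`
produces exactly `S`. -/
def sampleWeight (V : Finset α) (p : ℝ) (S : Finset α) : ℝ := p ^ #S * (1 - p) ^ (#V - #S)

theorem sampleWeight_nonneg (V : Finset α) {p : ℝ} (hp₀ : 0 ≤ p) (hp₁ : p ≤ 1)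
    (S : Finset α) : 0 ≤ sampleWeight V p S :=
  mul_nonneg (pow_nonneg hp₀ _) (pow_nonneg (sub_nonneg.2 hp₁) _)

theorem sum_sampleWeight_filter_subset [DecidableEq α] {V T : Finset α} (hT : T ⊆ V) (p : ℝ) :
    ∑ S ∈ V.powerset.filter (T ⊆ ·), sampleWeight V p S = p ^ #T := by
  have hIcc : V.powerset.filter (T ⊆ ·) = (V \ T).powerset.image (T ∪ ·) := by
    rw [← Icc_eq_image_powerset hT]
    ext S
    simp [mem_Icc, and_comm]
  have hdisj : ∀ U ∈ (V \ T).powerset, Disjoint T U := fun U hU =>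
    disjoint_of_subset_right (mem_powerset.1 hU) disjoint_sdiff
  rw [hIcc, sum_image fun U hU U' hU' h => by
    rw [← union_sdiff_cancel_left (hdisj U hU), h, union_sdiff_cancel_left (hdisj U' hU')]]
  calc ∑ U ∈ (V \ T).powerset, sampleWeight V p (T ∪ U)
      = ∑ U ∈ (V \ T).powerset, p ^ #T * (p ^ #U * (1 - p) ^ (#(V \ T) - #U)) := by
        refine sum_congr rfl fun U hU => ?_
        rw [sampleWeight, card_union_of_disjoint (hdisj U hU), card_sdiff_of_subset hT,
          Nat.sub_add_eq, pow_add]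
        ring
    _ = p ^ #T := by rw [← mul_sum, sum_pow_mul_eq_add_pow]; simp

theorem sum_sampleWeight_mul_card_filter [DecidableEq α] (V : Finset α) (p : ℝ) {A : Finset β}
    {T : β → Finset α} (hT : ∀ a ∈ A, T a ⊆ V) :
    ∑ S ∈ V.powerset, sampleWeight V p S * #(A.filter (T · ⊆ S)) = ∑ a ∈ A, p ^ #(T a) := by
  simp_rw [card_filter, Nat.cast_sum, mul_sum]
  rw [sum_comm]
  refine sum_congr rfl fun a ha => ?_
  rw [← sum_sampleWeight_filter_subset (hT a ha) p, sum_filter]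
  exact sum_congr rfl fun S _ => by split_ifs <;> simp

end Sampling

abbrev Segment := (ℝ × ℝ) × (ℝ × ℝ)

namespace Segment

def height (e : Segment) (x : ℝ) : ℝ :=
  e.1.2 + (x - e.1.1) * ((e.2.2 - e.1.2) / (e.2.1 - e.1.1))

def span (e : Segment) : Set ℝ := Set.Ioo e.1.1 e.2.1

def ends (e : Segment) : Finset (ℝ × ℝ) := {e.1, e.2}

theorem continuous_height (e : Segment) : Continuous e.height := by
  unfold height; fun_prop

theorem height_fst (e : Segment) : e.height e.1.1 = e.1.2 := by simp [height]

theorem height_snd {e : Segment} (h : e.1.1 < e.2.1) : e.height e.2.1 = e.2.2 := by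
  rw [height, mul_div_cancel₀ _ (sub_ne_zero.2 h.ne')]; ring

end Segment

def Crosses (e f : Segment) : Prop :=
  e ≠ f ∧ ∃ x ∈ e.span, x ∈ f.span ∧ e.height x = f.height x

def crossingPairs (E : Finset Segment) : Finset (Segment × Segment) :=
  (E ×ˢ E).filter fun p => Crosses p.1 p.2

/-- A straight-line drawing of a graph with vertex set `V`, each edge stored as its pair of
endpoints, the left one first. -/
structure IsDrawing (V : Finset (ℝ × ℝ)) (E : Finset Segment) : Prop where
  injOn_fst : Set.InjOn Prod.fst (V : Set (ℝ × ℝ))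
  fst_mem : ∀ e ∈ E, e.1 ∈ V
  snd_mem : ∀ e ∈ E, e.2 ∈ V
  fst_lt_snd : ∀ e ∈ E, e.1.1 < e.2.1
  height_ne : ∀ e ∈ E, ∀ v ∈ V, v.1 ∈ e.span → e.height v.1 ≠ v.2

structure IsPlaneDrawing (V : Finset (ℝ × ℝ)) (E : Finset Segment) : Prop
    extends IsDrawing V E where
  not_crosses : ∀ e ∈ E, ∀ f ∈ E, ¬Crosses e f

def spanning (E : Finset Segment) (ξ : ℝ) : Finset Segment := E.filter fun e => ξ ∈ e.span

def wedges (E : Finset Segment) (ξ : ℝ) : Finset (Segment × Segment) :=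
  (consecutivePairs (spanning E ξ) (·.height ξ)).filter fun p => p.1.1 = p.2.1

theorem mem_spanning {E : Finset Segment} {ξ : ℝ} {e : Segment} :
    e ∈ spanning E ξ ↔ e ∈ E ∧ e.1.1 < ξ ∧ ξ < e.2.1 := by
  simp [spanning, Segment.span]

theorem mem_crossingPairs {E : Finset Segment} {c : Segment × Segment} :
    c ∈ crossingPairs E ↔ (c.1 ∈ E ∧ c.2 ∈ E) ∧ Crosses c.1 c.2 := by
  rw [crossingPairs, mem_filter, mem_product]

theorem mem_wedges {E : Finset Segment} {ξ : ℝ} {p : Segment × Segment} :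
    p ∈ wedges E ξ ↔ p ∈ consecutivePairs (spanning E ξ) (·.height ξ) ∧ p.1.1 = p.2.1 :=
  mem_filter

namespace IsPlaneDrawing

variable {V : Finset (ℝ × ℝ)} {E : Finset Segment} {u v : Segment}

theorem height_ne_height (hD : IsPlaneDrawing V E) (hu : u ∈ E) (hv : v ∈ E) (huv : u ≠ v)
    {x : ℝ} (hxu : x ∈ u.span) (hxv : x ∈ v.span) : u.height x ≠ v.height x :=
  fun h => hD.not_crosses u hu v hv ⟨huv, x, hxu, hxv, h⟩

theorem injOn_height (hD : IsPlaneDrawing V E) (ξ : ℝ) :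
    Set.InjOn (·.height ξ) (spanning E ξ : Set Segment) := by
  intro u hu v hv h
  by_contra huv
  rw [mem_coe, spanning, mem_filter] at hu hv
  exact hD.height_ne_height hu.1 hv.1 huv hu.2 hv.2 h

theorem height_le_of_lt (hD : IsPlaneDrawing V E) (hu : u ∈ E) (hv : v ∈ E) {a b : ℝ}
    (hab : a ≤ b) (hsu : Set.Ioo a b ⊆ u.span) (hsv : Set.Ioo a b ⊆ v.span)
    (h : u.height a < v.height a) : u.height b ≤ v.height b :=
  le_of_lt_of_ne_on_Ioo u.continuous_height v.continuous_height hab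
    (fun x hx => hD.height_ne_height hu hv (by rintro rfl; exact h.false) (hsu hx) (hsv hx)) h

theorem height_le_of_lt' (hD : IsPlaneDrawing V E) (hu : u ∈ E) (hv : v ∈ E) {a b : ℝ}
    (hab : a ≤ b) (hsu : Set.Ioo a b ⊆ u.span) (hsv : Set.Ioo a b ⊆ v.span)
    (h : u.height b < v.height b) : u.height a ≤ v.height a :=
  le_of_lt_of_ne_on_Ioo' u.continuous_height v.continuous_height hab
    (fun x hx => hD.height_ne_height hu hv (by rintro rfl; exact h.false) (hsu hx) (hsv hx)) h

end IsPlaneDrawing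

structure IsOnlyVertexBetween (V : Finset (ℝ × ℝ)) (q : ℝ × ℝ) (ξ₀ ξ₁ : ℝ) : Prop where
  mem : q ∈ V
  lt_fst : ξ₀ < q.1
  fst_lt : q.1 < ξ₁
  eq_of_mem : ∀ v ∈ V, ξ₀ ≤ v.1 → v.1 ≤ ξ₁ → v = q

namespace IsOnlyVertexBetween

variable {V : Finset (ℝ × ℝ)} {E : Finset Segment} {q : ℝ × ℝ} {ξ₀ ξ₁ : ℝ} {e u v : Segment}

theorem snd_eq_or_mem_spanning (hD : IsDrawing V E) (hq : IsOnlyVertexBetween V q ξ₀ ξ₁)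
    (he : e ∈ spanning E ξ₀) : e.2 = q ∨ e ∈ spanning E ξ₁ := by
  rw [mem_spanning] at he ⊢
  by_cases h : e.2.1 ≤ ξ₁
  · exact .inl (hq.eq_of_mem _ (hD.snd_mem e he.1) he.2.2.le h)
  · exact .inr ⟨he.1, he.2.1.trans (hq.lt_fst.trans hq.fst_lt), not_le.1 h⟩

theorem fst_eq_or_mem_spanning (hD : IsDrawing V E) (hq : IsOnlyVertexBetween V q ξ₀ ξ₁)
    (he : e ∈ spanning E ξ₁) : e.1 = q ∨ e ∈ spanning E ξ₀ := by
  rw [mem_spanning] at he ⊢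
  by_cases h : ξ₀ ≤ e.1.1
  · exact .inl (hq.eq_of_mem _ (hD.fst_mem e he.1) h he.2.1.le)
  · exact .inr ⟨he.1, not_le.1 h, (hq.lt_fst.trans hq.fst_lt).trans he.2.2⟩

theorem mem_span_of_mem_spanning (hq : IsOnlyVertexBetween V q ξ₀ ξ₁) (h₀ : e ∈ spanning E ξ₀)
    (h₁ : e ∈ spanning E ξ₁) : q.1 ∈ e.span :=
  ⟨(mem_spanning.1 h₀).2.1.trans hq.lt_fst, hq.fst_lt.trans (mem_spanning.1 h₁).2.2⟩

theorem mem_spanning_of_fst_eq (hD : IsDrawing V E) (hq : IsOnlyVertexBetween V q ξ₀ ξ₁)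
    (he : e ∈ E) (hfst : e.1 = q) : e ∈ spanning E ξ₁ := by
  have hlt := hfst ▸ hD.fst_lt_snd e he
  refine mem_spanning.2 ⟨he, hfst ▸ hq.fst_lt, not_le.1 fun h => ?_⟩
  have := hq.eq_of_mem _ (hD.snd_mem e he) (hq.lt_fst.trans hlt).le h
  exact (this ▸ hlt).false

theorem mem_spanning_of_height_ne (hD : IsDrawing V E) (hq : IsOnlyVertexBetween V q ξ₀ ξ₁)
    (he : e ∈ spanning E ξ₀) (h : e.height q.1 ≠ q.2) : e ∈ spanning E ξ₁ :=
  (hq.snd_eq_or_mem_spanning hD he).resolve_left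
    fun hq' => h (hq' ▸ Segment.height_snd (hD.fst_lt_snd e (mem_spanning.1 he).1))

theorem snd_eq_of_height_eq (hD : IsDrawing V E) (hq : IsOnlyVertexBetween V q ξ₀ ξ₁)
    (he : e ∈ spanning E ξ₀) (h : e.height q.1 = q.2) : e.2 = q := by
  refine (hq.snd_eq_or_mem_spanning hD he).resolve_right fun h₁ => ?_
  exact hD.height_ne e (mem_spanning.1 he).1 q hq.mem (hq.mem_span_of_mem_spanning he h₁) h

theorem Ioo_subset_span₀ (hD : IsDrawing V E) (hq : IsOnlyVertexBetween V q ξ₀ ξ₁)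
    (he : e ∈ spanning E ξ₀) : Set.Ioo ξ₀ q.1 ⊆ e.span := by
  obtain ⟨-, h₁, -⟩ := mem_spanning.1 he
  refine Set.Ioo_subset_Ioo h₁.le ?_
  rcases hq.snd_eq_or_mem_spanning hD he with h | h
  · rw [h]
  · exact (hq.fst_lt.trans (mem_spanning.1 h).2.2).le

theorem Ioo_subset_span₁ (hD : IsDrawing V E) (hq : IsOnlyVertexBetween V q ξ₀ ξ₁)
    (he : e ∈ spanning E ξ₁) : Set.Ioo q.1 ξ₁ ⊆ e.span := by
  obtain ⟨-, -, h₂⟩ := mem_spanning.1 he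
  refine Set.Ioo_subset_Ioo ?_ h₂.le
  rcases hq.fst_eq_or_mem_spanning hD he with h | h
  · rw [h]
  · exact ((mem_spanning.1 h).2.1.trans hq.lt_fst).le

theorem height_le_of_le₀ (hD : IsPlaneDrawing V E) (hq : IsOnlyVertexBetween V q ξ₀ ξ₁)
    (hu : u ∈ spanning E ξ₀) (hv : v ∈ spanning E ξ₀) (h : u.height ξ₀ ≤ v.height ξ₀) :
    u.height q.1 ≤ v.height q.1 := by
  rcases h.lt_or_eq with h | h
  · exact hD.height_le_of_lt (mem_spanning.1 hu).1 (mem_spanning.1 hv).1 hq.lt_fst.le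
      (hq.Ioo_subset_span₀ hD.1 hu) (hq.Ioo_subset_span₀ hD.1 hv) h
  · rw [hD.injOn_height ξ₀ hu hv h]

theorem height_lt_of_lt₁ (hD : IsPlaneDrawing V E) (hq : IsOnlyVertexBetween V q ξ₀ ξ₁)
    (hu : u ∈ spanning E ξ₁) (hv : v ∈ spanning E ξ₁) (h : u.height q.1 < v.height q.1) :
    u.height ξ₁ < v.height ξ₁ := by
  refine (hD.height_le_of_lt (mem_spanning.1 hu).1 (mem_spanning.1 hv).1 hq.fst_lt.le
    (hq.Ioo_subset_span₁ hD.1 hu) (hq.Ioo_subset_span₁ hD.1 hv) h).lt_of_ne ?_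
  exact fun h' => h.ne (congrArg (·.height q.1) (hD.injOn_height ξ₁ hu hv h'))

theorem height_lt_iff (hD : IsPlaneDrawing V E) (hq : IsOnlyVertexBetween V q ξ₀ ξ₁)
    (hu₀ : u ∈ spanning E ξ₀) (hu₁ : u ∈ spanning E ξ₁) (hv₀ : v ∈ spanning E ξ₀)
    (hv₁ : v ∈ spanning E ξ₁) : u.height ξ₀ < v.height ξ₀ ↔ u.height ξ₁ < v.height ξ₁ := by
  have hsu : Set.Ioo ξ₀ ξ₁ ⊆ u.span :=
    Set.Ioo_subset_Ioo (mem_spanning.1 hu₀).2.1.le (mem_spanning.1 hu₁).2.2.le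
  have hsv : Set.Ioo ξ₀ ξ₁ ⊆ v.span :=
    Set.Ioo_subset_Ioo (mem_spanning.1 hv₀).2.1.le (mem_spanning.1 hv₁).2.2.le
  have hle := (hq.lt_fst.trans hq.fst_lt).le
  have huE := (mem_spanning.1 hu₀).1
  have hvE := (mem_spanning.1 hv₀).1
  constructor
  · intro h
    refine (hD.height_le_of_lt huE hvE hle hsu hsv h).lt_of_ne fun h' => h.ne ?_
    rw [hD.injOn_height ξ₁ hu₁ hv₁ h']
  · intro h
    refine (hD.height_le_of_lt' huE hvE hle hsu hsv h).lt_of_ne fun h' => h.ne ?_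
    rw [hD.injOn_height ξ₀ hu₀ hv₀ h']

def Encloses (q : ℝ × ℝ) (p : Segment × Segment) : Prop :=
  p.1.height q.1 ≤ q.2 ∧ q.2 ≤ p.2.height q.1

theorem lt_height_snd_of_encloses (hD : IsPlaneDrawing V E) (hq : IsOnlyVertexBetween V q ξ₀ ξ₁)
    {p : Segment × Segment} (hp : p ∈ wedges E ξ₀) (hpq : Encloses q p)
    (h : p.1.height q.1 = q.2) : q.2 < p.2.height q.1 := by
  obtain ⟨⟨⟨h₁, h₂⟩, hlt, -⟩, hfst⟩ := mem_wedges.1 hp |>.imp_left mem_consecutivePairs.1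
  refine hpq.2.lt_of_ne fun h' => hlt.ne ?_
  rw [Prod.ext hfst ((hq.snd_eq_of_height_eq hD.1 h₁ h).trans
    (hq.snd_eq_of_height_eq hD.1 h₂ h'.symm).symm)]

theorem height_fst_lt_height_snd_of_encloses (hD : IsPlaneDrawing V E)
    (hq : IsOnlyVertexBetween V q ξ₀ ξ₁) {p p' : Segment × Segment}
    (hp : p ∈ (wedges E ξ₀).filter (Encloses q)) (hp' : p' ∈ (wedges E ξ₀).filter (Encloses q))
    (hbelow : p.1.height q.1 < q.2 ↔ p'.1.height q.1 < q.2) :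
    p'.1.height q.1 < p.2.height q.1 := by
  rw [mem_filter] at hp hp'
  by_cases h : p.1.height q.1 < q.2
  · exact (hbelow.1 h).trans_le hp.2.2
  · exact hp'.2.1.trans_lt
      (hq.lt_height_snd_of_encloses hD hp.1 hp.2 (le_antisymm hp.2.1 (not_lt.1 h)))

/-- Two wedges enclosing `q` whose lower segments pass on the same side of `q` interleave on the
line `x = q.1`, hence already on the line `x = ξ₀`, where they are consecutive pairs. -/
theorem eq_of_encloses (hD : IsPlaneDrawing V E) (hq : IsOnlyVertexBetween V q ξ₀ ξ₁)
    {p p' : Segment × Segment} (hp : p ∈ (wedges E ξ₀).filter (Encloses q))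
    (hp' : p' ∈ (wedges E ξ₀).filter (Encloses q))
    (hbelow : p.1.height q.1 < q.2 ↔ p'.1.height q.1 < q.2) : p = p' := by
  have mono : ∀ {u v}, u ∈ spanning E ξ₀ → v ∈ spanning E ξ₀ →
      v.height q.1 < u.height q.1 → v.height ξ₀ < u.height ξ₀ := fun hu hv h =>
    lt_of_not_ge fun h' => h.not_ge (hq.height_le_of_le₀ hD hu hv h')
  have hw := (mem_wedges.1 (mem_filter.1 hp).1).1
  have hw' := (mem_wedges.1 (mem_filter.1 hp').1).1
  obtain ⟨⟨h₁, h₂⟩, -⟩ := mem_consecutivePairs.1 hw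
  obtain ⟨⟨h₁', h₂'⟩, -⟩ := mem_consecutivePairs.1 hw'
  exact eq_of_mem_consecutivePairs (hD.injOn_height ξ₀) hw hw'
    (mono h₂' h₁ (hq.height_fst_lt_height_snd_of_encloses hD hp' hp hbelow.symm))
    (mono h₂ h₁' (hq.height_fst_lt_height_snd_of_encloses hD hp hp' hbelow))

theorem card_filter_encloses_le_two (hD : IsPlaneDrawing V E)
    (hq : IsOnlyVertexBetween V q ξ₀ ξ₁) : #((wedges E ξ₀).filter (Encloses q)) ≤ 2 :=
  calc #((wedges E ξ₀).filter (Encloses q)) ≤ #(univ : Finset Bool) :=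
        card_le_card_of_injOn (fun p => decide (p.1.height q.1 < q.2))
          (fun _ _ => mem_coe.2 (mem_univ _))
          fun _ hp _ hp' h => hq.eq_of_encloses hD hp hp' (by simpa using h)
    _ = 2 := rfl

theorem filter_not_encloses_subset (hD : IsPlaneDrawing V E)
    (hq : IsOnlyVertexBetween V q ξ₀ ξ₁) :
    (wedges E ξ₀).filter (¬Encloses q ·) ⊆ wedges E ξ₁ := by
  intro p hp
  rw [mem_filter, mem_wedges, mem_consecutivePairs] at hp
  obtain ⟨⟨⟨⟨h₁, h₂⟩, hlt, hadj⟩, hfst⟩, hpq⟩ := hp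
  have hle := hq.height_le_of_le₀ hD h₁ h₂ hlt.le
  have hside : q.2 < p.1.height q.1 ∨ p.2.height q.1 < q.2 := by
    by_contra! h
    exact hpq ⟨h.1, h.2⟩
  have hne : p.1.height q.1 ≠ q.2 ∧ p.2.height q.1 ≠ q.2 := by
    rcases hside with h | h
    · exact ⟨h.ne', (h.trans_le hle).ne'⟩
    · exact ⟨(hle.trans_lt h).ne, h.ne⟩
  have h₁' := hq.mem_spanning_of_height_ne hD.1 h₁ hne.1
  have h₂' := hq.mem_spanning_of_height_ne hD.1 h₂ hne.2
  refine mem_wedges.2 ⟨mem_consecutivePairs.2 ⟨⟨h₁', h₂'⟩,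
    (hq.height_lt_iff hD h₁ h₁' h₂ h₂').1 hlt, fun c hc ⟨hc₁, hc₂⟩ => ?_⟩, hfst⟩
  rcases hq.fst_eq_or_mem_spanning hD.1 hc with hcq | hc₀
  · have hcq' : c.height q.1 = q.2 := hcq ▸ c.height_fst
    rcases hside with h | h
    · exact (hq.height_lt_of_lt₁ hD hc h₁' (hcq' ▸ h)).not_gt hc₁
    · exact (hq.height_lt_of_lt₁ hD h₂' hc (hcq' ▸ h)).not_gt hc₂
  · exact hadj c hc₀ ⟨(hq.height_lt_iff hD h₁ h₁' hc₀ hc).2 hc₁,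
      (hq.height_lt_iff hD hc₀ hc h₂ h₂').2 hc₂⟩

theorem consecutivePairs_subset_wedges (hD : IsPlaneDrawing V E)
    (hq : IsOnlyVertexBetween V q ξ₀ ξ₁) :
    consecutivePairs (E.filter (·.1 = q)) (·.height ξ₁) ⊆ wedges E ξ₁ := by
  have hout : ∀ e ∈ E.filter (·.1 = q), e ∈ spanning E ξ₁ ∧ e.height q.1 = q.2 := by
    intro e he
    rw [mem_filter] at he
    exact ⟨hq.mem_spanning_of_fst_eq hD.1 he.1 he.2, he.2 ▸ e.height_fst⟩
  intro p hp
  obtain ⟨⟨h₁, h₂⟩, hlt, hadj⟩ := mem_consecutivePairs.1 hp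
  refine mem_wedges.2 ⟨mem_consecutivePairs.2 ⟨⟨(hout _ h₁).1, (hout _ h₂).1⟩, hlt,
    fun c hc ⟨hc₁, hc₂⟩ => ?_⟩, ((mem_filter.1 h₁).2.trans (mem_filter.1 h₂).2.symm)⟩
  rcases hq.fst_eq_or_mem_spanning hD.1 hc with hcq | hc₀
  · exact hadj c (mem_filter.2 ⟨(mem_spanning.1 hc).1, hcq⟩) ⟨hc₁, hc₂⟩
  · have hne : c.height q.1 ≠ q.2 := hD.height_ne c (mem_spanning.1 hc).1 q hq.mem
      (hq.mem_span_of_mem_spanning hc₀ hc)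
    rcases hne.lt_or_gt with h | h
    · exact (hq.height_lt_of_lt₁ hD hc (hout _ h₁).1 ((hout _ h₁).2 ▸ h)).not_gt hc₁
    · exact (hq.height_lt_of_lt₁ hD (hout _ h₂).1 hc ((hout _ h₂).2 ▸ h)).not_gt hc₂

theorem card_filter_fst_eq_add_card_wedges_le (hD : IsPlaneDrawing V E)
    (hq : IsOnlyVertexBetween V q ξ₀ ξ₁) :
    #(E.filter (·.1 = q)) + #(wedges E ξ₀) ≤ #(wedges E ξ₁) + 3 := by
  have hnew := card_le_card_consecutivePairs_add_one (s := E.filter (·.1 = q))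
    ((hD.injOn_height ξ₁).mono fun e he =>
      hq.mem_spanning_of_fst_eq hD.1 (mem_filter.1 he).1 (mem_filter.1 he).2)
  have hdisj : Disjoint ((wedges E ξ₀).filter (¬Encloses q ·))
      (consecutivePairs (E.filter (·.1 = q)) (·.height ξ₁)) := by
    refine disjoint_left.2 fun p hp hp' => ?_
    have h₀ := (mem_consecutivePairs.1 (mem_wedges.1 (mem_filter.1 hp).1).1).1.1
    have hq' := (mem_filter.1 (mem_consecutivePairs.1 hp').1.1).2
    exact (hq' ▸ (mem_spanning.1 h₀).2.1).not_gt hq.lt_fst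
  have hsurv := card_le_card (union_subset (hq.filter_not_encloses_subset hD)
    (hq.consecutivePairs_subset_wedges hD))
  rw [card_union_of_disjoint hdisj] at hsurv
  have hsplit := card_filter_add_card_filter_not (s := wedges E ξ₀) (Encloses q)
  have := hq.card_filter_encloses_le_two hD
  omega

theorem filter_fst_lt_eq_insert (hq : IsOnlyVertexBetween V q ξ₀ ξ₁) :
    V.filter (·.1 < ξ₁) = insert q (V.filter (·.1 < ξ₀)) := by
  ext v
  simp only [mem_filter, Finset.mem_insert]
  constructor
  · rintro ⟨hv, hvξ⟩
    by_cases hvq : v = q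
    · exact .inl hvq
    · exact .inr ⟨hv, not_le.1 fun h => hvq (hq.eq_of_mem v hv h hvξ.le)⟩
  · rintro (rfl | ⟨hv, hvξ₀⟩)
    · exact ⟨hq.mem, hq.fst_lt⟩
    · exact ⟨hv, hvξ₀.trans (hq.lt_fst.trans hq.fst_lt)⟩

theorem fst_ne_left (hq : IsOnlyVertexBetween V q ξ₀ ξ₁) : ∀ v ∈ V, v.1 ≠ ξ₀ := by
  rintro v hv rfl
  exact hq.lt_fst.ne (congrArg Prod.fst (hq.eq_of_mem v hv le_rfl (hq.lt_fst.trans hq.fst_lt).le))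

end IsOnlyVertexBetween

theorem exists_isOnlyVertexBetween {V : Finset (ℝ × ℝ)} (hV : Set.InjOn Prod.fst (V : Set (ℝ × ℝ)))
    {ξ : ℝ} (hξ : ∀ v ∈ V, v.1 ≠ ξ) (hne : (V.filter (·.1 < ξ)).Nonempty) :
    ∃ q ξ₀, IsOnlyVertexBetween V q ξ₀ ξ := by
  obtain ⟨q, hqξ, hqmax⟩ := exists_max_image (V.filter (·.1 < ξ)) Prod.fst hne
  obtain ⟨hqV, hqξ⟩ := mem_filter.1 hqξ
  obtain ⟨ξ₀, hξ₀q, hξ₀⟩ := exists_lt_forall_lt (V.image Prod.fst) q.1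
  refine ⟨q, ξ₀, hqV, hξ₀q, hqξ, fun v hv h₀ h₁ => hV hv hqV (le_antisymm ?_ ?_)⟩
  · exact hqmax v (mem_filter.2 ⟨hv, h₁.lt_of_ne (hξ v hv)⟩)
  · exact not_lt.1 fun h => (h₀.trans_lt (hξ₀ v.1 (mem_image_of_mem _ hv) h)).false

namespace IsPlaneDrawing

variable {V : Finset (ℝ × ℝ)} {E : Finset Segment}

theorem sum_card_filter_fst_eq_le (hD : IsPlaneDrawing V E) (ξ : ℝ) (hξ : ∀ v ∈ V, v.1 ≠ ξ) :
    ∑ v ∈ V.filter (·.1 < ξ), #(E.filter (·.1 = v)) ≤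
      3 * #(V.filter (·.1 < ξ)) + #(wedges E ξ) := by
  induction hn : #(V.filter (·.1 < ξ)) generalizing ξ with
  | zero => simp [card_eq_zero.1 hn]
  | succ n ih =>
    obtain ⟨q, ξ₀, hq⟩ := exists_isOnlyVertexBetween hD.injOn_fst hξ (card_pos.1 (by omega))
    have hq₀ : q ∉ V.filter (·.1 < ξ₀) := fun h => (mem_filter.1 h).2.not_gt hq.lt_fst
    rw [hq.filter_fst_lt_eq_insert, card_insert_of_notMem hq₀] at hn
    rw [hq.filter_fst_lt_eq_insert, sum_insert hq₀]
    have := ih ξ₀ hq.fst_ne_left (by omega)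
    have := hq.card_filter_fst_eq_add_card_wedges_le hD
    omega

theorem card_le (hD : IsPlaneDrawing V E) : #E ≤ 3 * #V := by
  obtain ⟨M, hM⟩ := (V.image Prod.fst).bddAbove
  have hlt : ∀ v ∈ V, v.1 < M + 1 := fun v hv => (hM (mem_image_of_mem _ hv)).trans_lt (by simp)
  have hV : V.filter (·.1 < M + 1) = V := filter_true_of_mem hlt
  have hW : wedges E (M + 1) = ∅ := by
    refine eq_empty_of_forall_notMem fun p hp => ?_
    obtain ⟨⟨h₁, -⟩, -⟩ := mem_consecutivePairs.1 (mem_wedges.1 hp).1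
    obtain ⟨he, -, h⟩ := mem_spanning.1 h₁
    exact h.not_gt (hlt _ (hD.snd_mem _ he))
  have := hD.sum_card_filter_fst_eq_le (M + 1) fun v hv => (hlt v hv).ne
  rwa [hV, hW, card_empty, add_zero, ← card_eq_sum_card_fiberwise hD.fst_mem] at this

end IsPlaneDrawing

namespace IsDrawing

variable {V : Finset (ℝ × ℝ)} {E : Finset Segment} {e : Segment}

theorem mono (hD : IsDrawing V E) {E' : Finset Segment} (h : E' ⊆ E) : IsDrawing V E' :=
  ⟨hD.injOn_fst, fun e he => hD.fst_mem e (h he), fun e he => hD.snd_mem e (h he),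
    fun e he => hD.fst_lt_snd e (h he), fun e he => hD.height_ne e (h he)⟩

theorem restrict (hD : IsDrawing V E) {S : Finset (ℝ × ℝ)} (hS : S ⊆ V) :
    IsDrawing S (E.filter (·.ends ⊆ S)) := by
  have hends : ∀ e ∈ E.filter (·.ends ⊆ S), e.1 ∈ S ∧ e.2 ∈ S := fun e he => by
    simpa [Segment.ends, insert_subset_iff] using (mem_filter.1 he).2
  exact ⟨hD.injOn_fst.mono hS, fun e he => (hends e he).1, fun e he => (hends e he).2,
    fun e he => hD.fst_lt_snd e (mem_filter.1 he).1,
    fun e he v hv => hD.height_ne e (mem_filter.1 he).1 v (hS hv)⟩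

/-- Deleting one segment of every crossing pair leaves a plane drawing. -/
theorem card_le_add_card_crossingPairs (hD : IsDrawing V E) :
    #E ≤ 3 * #V + #(crossingPairs E) := by
  set E' := E \ (crossingPairs E).image Prod.fst
  have hplane : IsPlaneDrawing V E' := by
    refine ⟨hD.mono sdiff_subset, fun e he f hf hef => (mem_sdiff.1 he).2 ?_⟩
    exact mem_image.2 ⟨(e, f), mem_filter.2 ⟨mem_product.2
      ⟨(mem_sdiff.1 he).1, (mem_sdiff.1 hf).1⟩, hef⟩, rfl⟩
  calc #E ≤ #E' + #((crossingPairs E).image Prod.fst) := card_le_card_sdiff_add_card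
    _ ≤ 3 * #V + #(crossingPairs E) := add_le_add hplane.card_le card_image_le

theorem ends_subset (hD : IsDrawing V E) (he : e ∈ E) : e.ends ⊆ V := by
  simp [Segment.ends, insert_subset_iff, hD.fst_mem e he, hD.snd_mem e he]

theorem card_ends (hD : IsDrawing V E) (he : e ∈ E) : #e.ends = 2 :=
  card_pair fun h => (hD.fst_lt_snd e he).ne (congrArg Prod.fst h)

theorem card_filter_ends_subset_le (hD : IsDrawing V E) {S : Finset (ℝ × ℝ)} (hS : S ⊆ V) :
    #(E.filter (·.ends ⊆ S)) ≤
      3 * #S + #((crossingPairs E).filter fun c => c.1.ends ∪ c.2.ends ⊆ S) := by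
  have hX : crossingPairs (E.filter (·.ends ⊆ S)) =
      (crossingPairs E).filter fun c => c.1.ends ∪ c.2.ends ⊆ S := by
    ext c
    simp only [crossingPairs, mem_filter, mem_product, union_subset_iff]
    tauto
  exact hX ▸ (hD.restrict hS).card_le_add_card_crossingPairs

/-- The crossing bound applied to a random sample of the vertices, in expectation. -/
theorem sq_mul_card_le (hD : IsDrawing V E)
    (hdisj : ∀ c ∈ crossingPairs E, Disjoint c.1.ends c.2.ends) {p : ℝ} (hp₀ : 0 ≤ p)
    (hp₁ : p ≤ 1) : p ^ 2 * #E ≤ 3 * p * #V + p ^ 4 * #(crossingPairs E) := by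
  have hX : ∀ c ∈ crossingPairs E, c.1 ∈ E ∧ c.2 ∈ E := fun c hc => (mem_crossingPairs.1 hc).1
  have hV : ∀ S ∈ V.powerset, V.filter ({·} ⊆ S) = S := fun S hS => by
    ext v
    simpa using fun hv => mem_powerset.1 hS hv
  calc p ^ 2 * #E = ∑ S ∈ V.powerset, sampleWeight V p S * #(E.filter (·.ends ⊆ S)) := by
        rw [sum_sampleWeight_mul_card_filter V p fun e he => hD.ends_subset he,
          sum_congr rfl fun e he => by rw [hD.card_ends he]]
        simp [mul_comm]
    _ ≤ ∑ S ∈ V.powerset, sampleWeight V p S * (3 * #(V.filter ({·} ⊆ S)) +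
          #((crossingPairs E).filter fun c => c.1.ends ∪ c.2.ends ⊆ S)) := by
        refine sum_le_sum fun S hS => mul_le_mul_of_nonneg_left ?_ (sampleWeight_nonneg V hp₀ hp₁ S)
        rw [hV S hS]
        exact_mod_cast hD.card_filter_ends_subset_le (mem_powerset.1 hS)
    _ = 3 * p * #V + p ^ 4 * #(crossingPairs E) := by
        simp only [mul_add, sum_add_distrib, mul_left_comm _ (3 : ℝ), ← mul_sum]
        rw [sum_sampleWeight_mul_card_filter V p fun v hv => by simpa,
          sum_sampleWeight_mul_card_filter V p fun c hc =>
            union_subset (hD.ends_subset (hX c hc).1) (hD.ends_subset (hX c hc).2),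
          sum_congr (s₁ := crossingPairs E) rfl fun c hc => by
            rw [card_union_of_disjoint (hdisj c hc), hD.card_ends (hX c hc).1,
              hD.card_ends (hX c hc).2]]
        simp only [card_singleton, pow_one, sum_const, nsmul_eq_mul]
        ring

/-- The crossing lemma, with Székely's choice of sampling probability `p = 4|V|/|E|`. -/
theorem card_pow_three_le (hD : IsDrawing V E)
    (hdisj : ∀ c ∈ crossingPairs E, Disjoint c.1.ends c.2.ends) (hVE : 4 * #V ≤ #E) :
    (#E : ℝ) ^ 3 ≤ 64 * #V ^ 2 * #(crossingPairs E) := by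
  rcases E.eq_empty_or_nonempty with rfl | ⟨e, he⟩
  · rw [card_empty, Nat.cast_zero, zero_pow three_ne_zero]
    positivity
  have hV : (0 : ℝ) < #V := by exact_mod_cast card_pos.2 ⟨e.1, hD.fst_mem e he⟩
  have hE : (0 : ℝ) < #E := by exact_mod_cast card_pos.2 ⟨e, he⟩
  have hVE' : (4 * #V : ℝ) ≤ #E := by exact_mod_cast hVE
  set p : ℝ := 4 * #V / #E
  have hpE : p * #E = 4 * #V := div_mul_cancel₀ _ hE.ne'
  have h := mul_le_mul_of_nonneg_right
    (hD.sq_mul_card_le hdisj (p := p) (by positivity) ((div_le_one hE).2 hVE'))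
    (pow_nonneg hE.le 4)
  have h' : 4 * (#V : ℝ) ^ 2 * #E ^ 3 ≤ 4 * #V ^ 2 * (64 * #V ^ 2 * #(crossingPairs E)) := by
    have e₁ : p ^ 2 * #E * (#E : ℝ) ^ 4 = (p * #E) ^ 2 * #E ^ 3 := by ring
    have e₂ : (3 * p * #V + p ^ 4 * #(crossingPairs E)) * (#E : ℝ) ^ 4 =
        3 * #V * (p * #E) * #E ^ 3 + (p * #E) ^ 4 * #(crossingPairs E) := by ring
    rw [e₁, e₂, hpE] at h
    linarith
  exact le_of_mul_le_mul_left h' (by positivity)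

end IsDrawing

def IsLine (l : Set (ℝ × ℝ)) : Prop :=
  ∃ a b c : ℝ, (a, b) ≠ (0, 0) ∧ l = {q : ℝ × ℝ | a * q.1 + b * q.2 = c}

namespace IsLine

variable {l l' : Set (ℝ × ℝ)} {p q : ℝ × ℝ}

theorem eq_setOf (hl : IsLine l) (hp : p ∈ l) (hq : q ∈ l) (hpq : p ≠ q) :
    l = {r | (q.1 - p.1) * (r.2 - p.2) = (q.2 - p.2) * (r.1 - p.1)} := by
  obtain ⟨a, b, c, hab, rfl⟩ := hl
  have hab' : a ≠ 0 ∨ b ≠ 0 := by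
    by_contra! h
    exact hab (by rw [h.1, h.2])
  have hpq' : q.1 - p.1 ≠ 0 ∨ q.2 - p.2 ≠ 0 := by
    by_contra! h
    exact hpq (Prod.ext (by linarith) (by linarith))
  simp only [Set.mem_ofPred_eq] at hp hq
  ext r
  simp only [Set.mem_ofPred_eq]
  constructor
  · intro hr
    rw [← sub_eq_zero]
    rcases hab' with h | h
    · refine (mul_eq_zero.1 ?_).resolve_left h
      linear_combination (r.2 - p.2) * (hq - hp) - (q.2 - p.2) * (hr - hp)
    · refine (mul_eq_zero.1 ?_).resolve_left h
      linear_combination (q.1 - p.1) * (hr - hp) - (r.1 - p.1) * (hq - hp)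
  · intro hr
    suffices a * (r.1 - p.1) + b * (r.2 - p.2) = 0 by linear_combination this + hp
    rcases hpq' with h | h
    · refine (mul_eq_zero.1 ?_).resolve_left h
      linear_combination (r.1 - p.1) * (hq - hp) + b * hr
    · refine (mul_eq_zero.1 ?_).resolve_left h
      linear_combination (r.2 - p.2) * (hq - hp) - a * hr

theorem eq_of_mem (hl : IsLine l) (hl' : IsLine l') (hp : p ∈ l) (hq : q ∈ l) (hp' : p ∈ l')
    (hq' : q ∈ l') (hpq : p ≠ q) : l = l' :=
  (hl.eq_setOf hp hq hpq).trans (hl'.eq_setOf hp' hq' hpq).symm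

theorem mk_height_mem (hl : IsLine l) {e : Segment} (h₁ : e.1 ∈ l) (h₂ : e.2 ∈ l)
    (hlt : e.1.1 < e.2.1) (x : ℝ) : (x, e.height x) ∈ l := by
  rw [hl.eq_setOf h₁ h₂ fun h => hlt.ne (congrArg Prod.fst h)]
  have : e.2.1 - e.1.1 ≠ 0 := sub_ne_zero.2 hlt.ne'
  simp only [Set.mem_ofPred_eq, Segment.height]
  field_simp
  ring

end IsLine

def lineSegments (P : Finset (ℝ × ℝ)) (l : Set (ℝ × ℝ)) : Finset Segment :=
  consecutivePairs (P.filter (· ∈ l)) Prod.fst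

def incidenceSegments (P : Finset (ℝ × ℝ)) (L : Finset (Set (ℝ × ℝ))) : Finset Segment :=
  L.biUnion (lineSegments P)

section Incidences

variable {P : Finset (ℝ × ℝ)} {L : Finset (Set (ℝ × ℝ))} {l l' : Set (ℝ × ℝ)} {e f : Segment}

theorem mem_lineSegments :
    e ∈ lineSegments P l ↔ ((e.1 ∈ P ∧ e.1 ∈ l) ∧ e.2 ∈ P ∧ e.2 ∈ l) ∧ e.1.1 < e.2.1 ∧
      ∀ c ∈ P.filter (· ∈ l), ¬(e.1.1 < c.1 ∧ c.1 < e.2.1) := by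
  simp only [lineSegments, mem_consecutivePairs, mem_filter]

theorem eq_of_mem_lineSegments (hP : Set.InjOn Prod.fst (P : Set (ℝ × ℝ)))
    (he : e ∈ lineSegments P l) (hf : f ∈ lineSegments P l) {x : ℝ} (hxe : x ∈ e.span)
    (hxf : x ∈ f.span) : e = f :=
  eq_of_mem_consecutivePairs (hP.mono (filter_subset _ _)) he hf (hxe.1.trans hxf.2)
    (hxf.1.trans hxe.2)

theorem mk_height_mem_of_mem_lineSegments (hl : IsLine l) (he : e ∈ lineSegments P l) (x : ℝ) :
    (x, e.height x) ∈ l :=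
  have he := mem_lineSegments.1 he
  hl.mk_height_mem he.1.1.2 he.1.2.2 he.2.1 x

theorem isDrawing_incidenceSegments (hP : Set.InjOn Prod.fst (P : Set (ℝ × ℝ)))
    (hL : ∀ l ∈ L, IsLine l) : IsDrawing P (incidenceSegments P L) := by
  have hmem : ∀ e ∈ incidenceSegments P L, ∃ l ∈ L, e ∈ lineSegments P l := fun e he =>
    mem_biUnion.1 he
  refine ⟨hP, fun e he => ?_, fun e he => ?_, fun e he => ?_, fun e he v hv hve hev => ?_⟩ <;>
    obtain ⟨l, hl, hel⟩ := hmem e he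
  · exact (mem_lineSegments.1 hel).1.1.1
  · exact (mem_lineSegments.1 hel).1.2.1
  · exact (mem_lineSegments.1 hel).2.1
  · have hvl : v ∈ l := by simpa [hev] using mk_height_mem_of_mem_lineSegments (hL l hl) hel v.1
    exact (mem_lineSegments.1 hel).2.2 v (mem_filter.2 ⟨hv, hvl⟩) hve

theorem sum_card_filter_mem_le (hP : Set.InjOn Prod.fst (P : Set (ℝ × ℝ)))
    (hL : ∀ l ∈ L, IsLine l) :
    ∑ l ∈ L, #(P.filter (· ∈ l)) ≤ #(incidenceSegments P L) + #L := by
  have hdisj : (L : Set (Set (ℝ × ℝ))).PairwiseDisjoint (lineSegments P) := by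
    refine fun l hl l' hl' hll' => disjoint_left.2 fun e he he' => hll' ?_
    obtain ⟨⟨⟨-, h₁⟩, -, h₂⟩, hlt, -⟩ := mem_lineSegments.1 he
    obtain ⟨⟨⟨-, h₁'⟩, -, h₂'⟩, -⟩ := mem_lineSegments.1 he'
    exact (hL l hl).eq_of_mem (hL l' hl') h₁ h₂ h₁' h₂' fun h => hlt.ne (congrArg Prod.fst h)
  rw [incidenceSegments, card_biUnion hdisj]
  calc ∑ l ∈ L, #(P.filter (· ∈ l)) ≤ ∑ l ∈ L, (#(lineSegments P l) + 1) :=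
        sum_le_sum fun l _ => card_le_card_consecutivePairs_add_one (hP.mono (filter_subset _ _))
    _ = ∑ l ∈ L, #(lineSegments P l) + #L := by rw [sum_add_distrib, card_eq_sum_ones]

theorem Crosses.exists_inter_eq_singleton (hP : Set.InjOn Prod.fst (P : Set (ℝ × ℝ)))
    (hl : IsLine l) (hl' : IsLine l') (he : e ∈ lineSegments P l) (hf : f ∈ lineSegments P l')
    (hef : Crosses e f) : ∃ z, l ∩ l' = {z} ∧ z.1 ∈ e.span ∧ z.1 ∈ f.span := by
  obtain ⟨hne, x, hxe, hxf, hx⟩ := hef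
  have hz : (x, e.height x) ∈ l := mk_height_mem_of_mem_lineSegments hl he x
  have hz' : (x, e.height x) ∈ l' := hx ▸ mk_height_mem_of_mem_lineSegments hl' hf x
  refine ⟨(x, e.height x), Set.eq_singleton_iff_unique_mem.2 ⟨⟨hz, hz'⟩, ?_⟩, hxe, hxf⟩
  rintro w ⟨hw, hw'⟩
  by_contra hwz
  obtain rfl := hl.eq_of_mem hl' hw hz hw' hz' hwz
  exact hne (eq_of_mem_lineSegments hP he hf hxe hxf)

theorem exists_mem_lineSegments {c : Segment × Segment}
    (hc : c ∈ crossingPairs (incidenceSegments P L)) :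
    ∃ l ∈ L, ∃ l' ∈ L, c.1 ∈ lineSegments P l ∧ c.2 ∈ lineSegments P l' ∧ Crosses c.1 c.2 := by
  obtain ⟨⟨h₁, h₂⟩, hc⟩ := mem_crossingPairs.1 hc
  obtain ⟨l, hl, h₁⟩ := mem_biUnion.1 h₁
  obtain ⟨l', hl', h₂⟩ := mem_biUnion.1 h₂
  exact ⟨l, hl, l', hl', h₁, h₂, hc⟩

theorem disjoint_ends_of_mem_crossingPairs (hP : Set.InjOn Prod.fst (P : Set (ℝ × ℝ)))
    (hL : ∀ l ∈ L, IsLine l) {c : Segment × Segment}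
    (hc : c ∈ crossingPairs (incidenceSegments P L)) : Disjoint c.1.ends c.2.ends := by
  obtain ⟨l, hl, l', hl', h₁, h₂, hc⟩ := exists_mem_lineSegments hc
  obtain ⟨z, hz, hz₁, -⟩ := hc.exists_inter_eq_singleton hP (hL l hl) (hL l' hl') h₁ h₂
  obtain ⟨⟨⟨-, h₁l⟩, -, h₂l⟩, -⟩ := mem_lineSegments.1 h₁
  obtain ⟨⟨⟨-, h₁l'⟩, -, h₂l'⟩, -⟩ := mem_lineSegments.1 h₂
  refine disjoint_left.2 fun w hw hw' => ?_
  have hwl : w ∈ l := by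
    rcases Finset.mem_insert.1 hw with rfl | hw
    · exact h₁l
    · exact (Finset.mem_singleton.1 hw) ▸ h₂l
  have hwl' : w ∈ l' := by
    rcases Finset.mem_insert.1 hw' with rfl | hw'
    · exact h₁l'
    · exact (Finset.mem_singleton.1 hw') ▸ h₂l'
  have hwz : w = z := (hz ▸ Set.mem_inter hwl hwl' : w ∈ ({z} : Set _))
  subst hwz
  rcases Finset.mem_insert.1 hw with rfl | hw
  · exact hz₁.1.false
  · exact (Finset.mem_singleton.1 hw ▸ hz₁.2).false

theorem card_crossingPairs_le (hP : Set.InjOn Prod.fst (P : Set (ℝ × ℝ)))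
    (hL : ∀ l ∈ L, IsLine l) : #(crossingPairs (incidenceSegments P L)) ≤ #L * #L := by
  set X := crossingPairs (incidenceSegments P L)
  have hcover : X ⊆ (L ×ˢ L).biUnion fun ll =>
      X.filter fun c => c.1 ∈ lineSegments P ll.1 ∧ c.2 ∈ lineSegments P ll.2 := by
    intro c hc
    obtain ⟨l, hl, l', hl', h₁, h₂, -⟩ := exists_mem_lineSegments hc
    exact mem_biUnion.2 ⟨(l, l'), mem_product.2 ⟨hl, hl'⟩, mem_filter.2 ⟨hc, h₁, h₂⟩⟩
  refine (card_le_card hcover).trans ?_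
  rw [← card_product, ← mul_one #(L ×ˢ L)]
  refine card_biUnion_le_card_mul _ _ _ fun ll hll => card_le_one.2 fun c hc c' hc' => ?_
  obtain ⟨hl, hl'⟩ := mem_product.1 hll
  obtain ⟨hcX, h₁, h₂⟩ := mem_filter.1 hc
  obtain ⟨hcX', h₁', h₂'⟩ := mem_filter.1 hc'
  obtain ⟨z, hz, hz₁, hz₂⟩ := (mem_crossingPairs.1 hcX).2.exists_inter_eq_singleton hP
    (hL _ hl) (hL _ hl') h₁ h₂
  obtain ⟨z', hz', hz₁', hz₂'⟩ := (mem_crossingPairs.1 hcX').2.exists_inter_eq_singleton hP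
    (hL _ hl) (hL _ hl') h₁' h₂'
  obtain rfl : z = z' := Set.singleton_injective (hz.symm.trans hz')
  exact Prod.ext (eq_of_mem_lineSegments hP h₁ h₁' hz₁ hz₁')
    (eq_of_mem_lineSegments hP h₂ h₂' hz₂ hz₂')

end Incidences

theorem le_mul_rpow_of_pow_three_le {x a b : ℝ} (ha : 0 ≤ a) (hb : 0 ≤ b)
    (h : x ^ 3 ≤ 64 * a ^ 2 * b ^ 2) : x ≤ 4 * a ^ ((2 : ℝ) / 3) * b ^ ((2 : ℝ) / 3) := by
  have hcube : ∀ {y : ℝ}, 0 ≤ y → (y ^ ((2 : ℝ) / 3)) ^ 3 = y ^ 2 := fun hy => by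
    rw [← Real.rpow_natCast, ← Real.rpow_mul hy]
    norm_num
  refine le_of_pow_le_pow_left₀ three_ne_zero (by positivity) ?_
  rw [mul_pow, mul_pow, hcube ha, hcube hb]
  linarith

theorem sum_card_filter_mem_le_of_injOn_fst {P : Finset (ℝ × ℝ)} {L : Finset (Set (ℝ × ℝ))}
    (hP : Set.InjOn Prod.fst (P : Set (ℝ × ℝ))) (hL : ∀ l ∈ L, IsLine l) :
    ((∑ l ∈ L, #(P.filter (· ∈ l)) : ℕ) : ℝ) ≤
      4 * (#P : ℝ) ^ ((2 : ℝ) / 3) * (#L : ℝ) ^ ((2 : ℝ) / 3) + 4 * #P + #L := by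
  set E := incidenceSegments P L
  have hI : ((∑ l ∈ L, #(P.filter (· ∈ l)) : ℕ) : ℝ) ≤ #E + #L := by
    exact_mod_cast sum_card_filter_mem_le hP hL
  have hE : (#E : ℝ) ≤ 4 * (#P : ℝ) ^ ((2 : ℝ) / 3) * (#L : ℝ) ^ ((2 : ℝ) / 3) + 4 * #P := by
    by_cases hPE : 4 * #P ≤ #E
    · have hX : (#(crossingPairs E) : ℝ) ≤ #L ^ 2 := by
        exact_mod_cast (card_crossingPairs_le hP hL).trans_eq (sq _).symm
      have hcube := (isDrawing_incidenceSegments hP hL).card_pow_three_le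
        (fun c hc => disjoint_ends_of_mem_crossingPairs hP hL hc) hPE
      have := le_mul_rpow_of_pow_three_le (x := #E) (Nat.cast_nonneg #P) (Nat.cast_nonneg #L)
        (hcube.trans (by gcongr))
      linarith [(Nat.cast_nonneg #P : (0 : ℝ) ≤ #P)]
    · have : (#E : ℝ) ≤ 4 * #P := by exact_mod_cast (not_le.1 hPE).le
      have : 0 ≤ 4 * (#P : ℝ) ^ ((2 : ℝ) / 3) * (#L : ℝ) ^ ((2 : ℝ) / 3) := by positivity
      linarith
  linarith

def shear (t : ℝ) : ℝ × ℝ ≃ ℝ × ℝ where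
  toFun p := (p.1 + t * p.2, p.2)
  invFun p := (p.1 - t * p.2, p.2)
  left_inv p := by simp
  right_inv p := by simp

theorem IsLine.image_shear {l : Set (ℝ × ℝ)} (hl : IsLine l) (t : ℝ) : IsLine (shear t '' l) := by
  obtain ⟨a, b, c, hab, rfl⟩ := hl
  refine ⟨a, b - a * t, c, fun h => hab ?_, ?_⟩
  · obtain ⟨ha, hb⟩ := Prod.mk.inj h
    rw [ha, zero_mul, sub_zero] at hb
    rw [ha, hb]
  · ext r
    rw [Equiv.image_eq_preimage_symm]
    simp only [Set.mem_preimage, Set.mem_ofPred_eq, shear, Equiv.coe_fn_symm_mk]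
    constructor <;> intro h <;> linarith

/-- Shearing by all but finitely many `t` separates the abscissas of the points of `P`. -/
theorem exists_injOn_fst_image_shear (P : Finset (ℝ × ℝ)) :
    ∃ t, Set.InjOn Prod.fst (P.image (shear t) : Set (ℝ × ℝ)) := by
  obtain ⟨t, ht⟩ := Infinite.exists_notMem_finset
    ((P ×ˢ P).image fun pq => (pq.2.1 - pq.1.1) / (pq.1.2 - pq.2.2))
  refine ⟨t, ?_⟩
  rw [coe_image]
  rintro _ ⟨p, hp, rfl⟩ _ ⟨q, hq, rfl⟩ h
  simp only [shear, Equiv.coe_fn_mk] at h ⊢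
  by_cases h₂ : p.2 = q.2
  · rw [Prod.ext (by rw [h₂] at h; linarith) h₂]
  · refine absurd (mem_image.2 ⟨(p, q), mem_product.2 ⟨hp, hq⟩, ?_⟩) ht
    field_simp [sub_ne_zero.2 h₂]
    linarith

theorem sum_card_filter_mem_image {α β : Type*} [DecidableEq β] {f : α → β}
    (hf : Function.Injective f) (P : Finset α) (L : Finset (Set α)) :
    ∑ l ∈ L.image (f '' ·), #((P.image f).filter (· ∈ l)) = ∑ l ∈ L, #(P.filter (· ∈ l)) := by
  rw [sum_image fun l _ l' _ h => Set.image_injective.2 hf h]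
  refine sum_congr rfl fun l _ => ?_
  rw [filter_image, card_image_of_injective _ hf]
  simp only [hf.mem_set_image]

theorem ncard_incidences_eq_sum {α : Type*} (P : Finset α) (L : Finset (Set α)) :
    {pl : α × Set α | pl.1 ∈ P ∧ pl.2 ∈ L ∧ pl.1 ∈ pl.2}.ncard =
      ∑ l ∈ L, #(P.filter (· ∈ l)) := by
  have : {pl : α × Set α | pl.1 ∈ P ∧ pl.2 ∈ L ∧ pl.1 ∈ pl.2} =
      ((P ×ˢ L).filter fun pl => pl.1 ∈ pl.2 : Finset _) := by
    ext pl
    simp [and_assoc]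
  rw [this, Set.ncard_coe_finset, card_filter, sum_product_right]
  simp only [card_filter]

end SzemerediTrotter

end

open SzemerediTrotter in
/-- **The Szemerédi–Trotter theorem with explicit constants** (Fact 1.2).

For a finite set `P` of points in the real plane and a finite set `L` of affine lines,
the number of incidences satisfies
`|{(p, l) ∈ P × L : p ∈ l}| ≤ 4 |P|^{2/3} |L|^{2/3} + 4 |P| + |L|`. -/
theorem szemeredi_trotter
    (P : Finset (ℝ × ℝ)) (L : Finset (Set (ℝ × ℝ)))
    (hL : ∀ l ∈ L, ∃ a b c : ℝ, (a, b) ≠ (0, 0) ∧ l = {q : ℝ × ℝ | a * q.1 + b * q.2 = c}) :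
    (({pl : (ℝ × ℝ) × Set (ℝ × ℝ) | pl.1 ∈ P ∧ pl.2 ∈ L ∧ pl.1 ∈ pl.2}.ncard : ℝ)) ≤
      4 * (P.card : ℝ) ^ ((2 : ℝ) / 3) * (L.card : ℝ) ^ ((2 : ℝ) / 3)
        + 4 * P.card + L.card := by
  obtain ⟨t, ht⟩ := exists_injOn_fst_image_shear P
  have hL' : ∀ l ∈ L.image (shear t '' ·), IsLine l := by
    simpa using fun l hl => IsLine.image_shear (hL l hl) t
  have := sum_card_filter_mem_le_of_injOn_fst ht hL'
  rwa [sum_card_filter_mem_image (shear t).injective,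
    Finset.card_image_of_injective _ (shear t).injective,
    Finset.card_image_of_injective _ (Set.image_injective.2 (shear t).injective),
    ← ncard_incidences_eq_sum] at this
end
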